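/- arXiv:1801.01046 — 10 statements merged into one kernel-verified Lean document; each statement's English description precedes it below -/
import Mathlib

section
/- (Identification of deformations with solutions of the system (1)-(2).) Suppose x⁰ ∈ k[[t]]ⁿ, y⁰ ∈ k[[t]]ˡ satisfy f(x⁰,y⁰) = 0 and Q(x⁰,y⁰) ≠ 0 in k[[t]], with t-adic order d. Let A be a test ring with maximal ideal m. For every pair (x,y) ∈ A[[t]]ⁿ × A[[t]]ˡ with f(x,y) = 0 that reduces to (x⁰,y⁰) mod m, there is a unique monic polynomial q ∈ A[t] of degree d with all coefficients of q − tᵈ in m such that Q(x,y) ∈ qA[[t]], and moreover Q(x,y) = q·u with u invertible in A[[t]]. Consequently, the map (x,y) ↦ (q,x,y) is a bijection from the set of such pairs (x,y) onto the set of triples (q,x,y) where q ∈ A[t] is monic of degree d with q − tᵈ ∈ m[t], x and y reduce to x⁰ and y⁰ mod m, Q(x,y) ∈ qA[[t]], and f(x,y) = 0. -/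
/-! Modulo `m`, the series `Q(x,y)` reduces to the image of `Q(x⁰,y⁰)`, so its reduction has
`t`-adic order exactly `d`. A ring with nilpotent maximal ideal is `m`-adically complete, so the
Weierstrass preparation theorem writes `Q(x,y) = q·u` with `q` distinguished of degree `d` and `u`
a unit, uniquely. Conversely, if a distinguished `q` of degree `d` divides `Q(x,y)`, the cofactor
is a unit, because modulo `m` it is `Q(x,y)/tᵈ`, whose constant term is the nonzero `t`-adic
leading coefficient. Hence the triples `(q,x,y)` are exactly the Weierstrass factorizations, and
forgetting `q` is a bijection. -/

open MvPolynomial IsLocalRing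

noncomputable section

/-- The `l×l` Jacobian matrix `C(x,y)` of `f` with respect to the `y`-variables. -/
def jacC {k : Type*} [Field k] {n l : ℕ} (f : Fin l → MvPolynomial (Fin n ⊕ Fin l) k) :
    Matrix (Fin l) (Fin l) (MvPolynomial (Fin n ⊕ Fin l) k) :=
  Matrix.of fun i j => pderiv (Sum.inr j) (f i)

/-- `Q(x,y) := det C(x,y)`. -/
def jacQ {k : Type*} [Field k] {n l : ℕ} (f : Fin l → MvPolynomial (Fin n ⊕ Fin l) k) :
    MvPolynomial (Fin n ⊕ Fin l) k :=
  (jacC f).det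

/-- `(x,y)` is an `A`-deformation of `(x⁰,y⁰)` solving `f = 0`:  `f(x,y) = 0` and `(x,y)`
reduces to `(x⁰,y⁰)` coefficientwise modulo the maximal ideal. -/
def pairCond {k : Type*} [Field k] {n l : ℕ} (f : Fin l → MvPolynomial (Fin n ⊕ Fin l) k)
    (x0 : Fin n → PowerSeries k) (y0 : Fin l → PowerSeries k)
    {A : Type*} [CommRing A] [Algebra k A] [IsLocalRing A]
    (p : (Fin n → PowerSeries A) × (Fin l → PowerSeries A)) : Prop :=
  (∀ i, aeval (Sum.elim p.1 p.2) (f i) = 0) ∧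
  (∀ i j, PowerSeries.coeff j (p.1 i) -
    algebraMap k A (PowerSeries.coeff j (x0 i)) ∈ maximalIdeal A) ∧
  (∀ i j, PowerSeries.coeff j (p.2 i) -
    algebraMap k A (PowerSeries.coeff j (y0 i)) ∈ maximalIdeal A)

/-- `q` is monic of degree `d` and congruent to `tᵈ` modulo the maximal ideal. -/
def qCond {A : Type*} [CommRing A] [IsLocalRing A] (d : ℕ) (q : Polynomial A) : Prop :=
  q.Monic ∧ q.natDegree = d ∧ ∀ i, (q - Polynomial.X ^ d).coeff i ∈ maximalIdeal A

theorem IsAdicComplete.of_pow_eq_bot {R M : Type*} [CommRing R] [AddCommGroup M] [Module R M]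
    {I : Ideal R} {N : ℕ} (hN : I ^ N = ⊥) : IsAdicComplete I M where
  haus' x hx := by simpa [SModEq.zero, hN] using hx N
  prec' f hf := by
    refine ⟨f N, fun n => ?_⟩
    rcases le_total n N with hn | hn
    · exact hf hn
    · have : f N ≡ f n [SMOD (⊥ : Submodule R M)] := by simpa [hN] using hf hn
      exact (this.mono bot_le).symm

theorem qCond_iff {A : Type*} [CommRing A] [IsLocalRing A] {d : ℕ} {q : Polynomial A} :
    qCond d q ↔ q.IsDistinguishedAt (maximalIdeal A) ∧ q.natDegree = d := by
  constructor
  · rintro ⟨hmonic, rfl, hcoeff⟩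
    refine ⟨⟨⟨fun {i} hi => ?_⟩, hmonic⟩, rfl⟩
    simpa [Polynomial.coeff_X_pow, hi.ne] using hcoeff i
  · rintro ⟨hq, rfl⟩
    refine ⟨hq.monic, rfl, fun i => ?_⟩
    rcases lt_trichotomy i q.natDegree with hi | rfl | hi
    · simpa [Polynomial.coeff_X_pow, hi.ne] using hq.mem hi
    · simp [hq.monic.coeff_natDegree]
    · simp [Polynomial.coeff_X_pow, hi.ne', Polynomial.coeff_eq_zero_of_natDegree_lt hi]

namespace PowerSeries

theorem order_map_of_injective {R S : Type*} [Semiring R] [Semiring S] {φ : R →+* S}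
    (hφ : Function.Injective φ) (g : PowerSeries R) : (g.map φ).order = g.order := by
  refine order_eq.mpr ⟨fun i hi => ?_, fun i hi => ?_⟩ <;>
    simp only [coeff_map, ne_eq, map_eq_zero_iff _ hφ]
  exacts [(order_eq.mp rfl).1 i hi, (order_eq.mp rfl).2 i hi]

variable {A : Type*} [CommRing A] [IsLocalRing A] {g b : PowerSeries A} {q : Polynomial A}

theorem isUnit_of_eq_mul_of_order_map_eq_natDegree (hq : q.IsDistinguishedAt (maximalIdeal A))
    (hg : (g.map (residue A)).order = q.natDegree) (hgq : g = q * b) : IsUnit b := by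
  have hmap : g.map (residue A) = X ^ q.natDegree * b.map (residue A) := by
    have hqX : q.map (residue A) = Polynomial.X ^ q.natDegree := hq.map_eq_X_pow
    rw [hgq, map_mul, ← Polynomial.polynomial_map_coe, hqX]
    simp
  have hcoeff := (order_eq_nat.mp hg).1
  rw [hmap, coeff_X_pow_mul', if_pos le_rfl, Nat.sub_self, coeff_map,
    coeff_zero_eq_constantCoeff, Ne, residue_eq_zero_iff] at hcoeff
  exact isUnit_iff_constantCoeff.mpr ((mem_nonunits_iff.not_left).mp hcoeff)

theorem qCond_and_mem_span_iff {d : ℕ} (hg : (g.map (residue A)).order = d) :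
    qCond d q ∧ g ∈ Ideal.span {(q : PowerSeries A)} ↔ ∃ h, g.IsWeierstrassFactorization q h := by
  rw [qCond_iff]
  constructor
  · rintro ⟨⟨hq, rfl⟩, hmem⟩
    obtain ⟨b, hb⟩ := Ideal.mem_span_singleton'.mp hmem
    rw [mul_comm] at hb
    exact ⟨b, hq, isUnit_of_eq_mul_of_order_map_eq_natDegree hq hg hb.symm, hb.symm⟩
  · rintro ⟨h, H⟩
    refine ⟨⟨H.isDistinguishedAt, by simp [H.natDegree_eq_toNat_order_map, hg]⟩,
      Ideal.mem_span_singleton'.mpr ⟨h, by rw [mul_comm, H.eq_mul]⟩⟩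

theorem existsUnique_qCond_and_mem_span [IsAdicComplete (maximalIdeal A) A] {d : ℕ}
    (hg : (g.map (residue A)).order = d) :
    ∃! q : Polynomial A, qCond d q ∧ g ∈ Ideal.span {(q : PowerSeries A)} := by
  simp_rw [qCond_and_mem_span_iff hg]
  obtain ⟨q, h, H⟩ := exists_isWeierstrassFactorization (g := g) (by simp [← order_eq_top, hg])
  exact ⟨q, ⟨h, H⟩, fun q' ⟨h', H'⟩ => (H'.elim H).1⟩

end PowerSeries

theorem map_residue_aeval {k σ A : Type*} [CommRing k] [CommRing A] [Algebra k A] [IsLocalRing A]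
    {a : σ → PowerSeries A} {b : σ → PowerSeries k}
    (hab : ∀ v j, PowerSeries.coeff j (a v) - algebraMap k A (PowerSeries.coeff j (b v)) ∈
      maximalIdeal A) (P : MvPolynomial σ k) :
    (aeval a P).map (residue A) = (aeval b P).map (algebraMap k (ResidueField A)) := by
  have hab' : ∀ v, PowerSeries.mapAlgHom (IsScalarTower.toAlgHom k A (ResidueField A)) (a v) =
      PowerSeries.mapAlgHom (Algebra.ofId k (ResidueField A)) (b v) := fun v => by
    ext j
    have := (residue_eq_zero_iff _).mpr (hab v j)
    rw [map_sub, sub_eq_zero] at this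
    rwa [PowerSeries.mapAlgHom_apply, PowerSeries.mapAlgHom_apply, PowerSeries.coeff_map,
      PowerSeries.coeff_map]
  have := congrArg (aeval · P) (funext hab')
  simp only [← comp_aeval_apply] at this
  simpa [PowerSeries.mapAlgHom_apply] using this

theorem order_map_residue_aeval_of_pairCond {k : Type*} [Field k] {n l : ℕ}
    {f : Fin l → MvPolynomial (Fin n ⊕ Fin l) k} {x0 : Fin n → PowerSeries k}
    {y0 : Fin l → PowerSeries k} {A : Type*} [CommRing A] [Algebra k A] [IsLocalRing A]
    {p : (Fin n → PowerSeries A) × (Fin l → PowerSeries A)} (hp : pairCond f x0 y0 p)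
    (P : MvPolynomial (Fin n ⊕ Fin l) k) :
    ((aeval (Sum.elim p.1 p.2) P).map (residue A)).order = (aeval (Sum.elim x0 y0) P).order := by
  rw [map_residue_aeval (b := Sum.elim x0 y0) ?_ P,
    PowerSeries.order_map_of_injective (algebraMap k (ResidueField A)).injective]
  rintro (i | i) j
  exacts [hp.2.1 i j, hp.2.2 i j]

theorem deformations_eq_solutions_general {k : Type*} [Field k] {n l : ℕ}
    (f : Fin l → MvPolynomial (Fin n ⊕ Fin l) k)
    (x0 : Fin n → PowerSeries k) (y0 : Fin l → PowerSeries k)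
    (d : ℕ)
    (hlow : ∀ j < d, PowerSeries.coeff j (aeval (Sum.elim x0 y0) (jacQ f)) = 0)
    (hord : PowerSeries.coeff d (aeval (Sum.elim x0 y0) (jacQ f)) ≠ 0)
    (A : Type*) [CommRing A] [Algebra k A] [IsLocalRing A]
    (hnil : IsNilpotent (maximalIdeal A)) :
    (∀ p : (Fin n → PowerSeries A) × (Fin l → PowerSeries A), pairCond f x0 y0 p →
      ∃! q : Polynomial A, qCond d q ∧
        aeval (Sum.elim p.1 p.2) (jacQ f) ∈ Ideal.span {(q : PowerSeries A)}) ∧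
    (∀ (p : (Fin n → PowerSeries A) × (Fin l → PowerSeries A)) (q : Polynomial A),
      pairCond f x0 y0 p → qCond d q →
      aeval (Sum.elim p.1 p.2) (jacQ f) ∈ Ideal.span {(q : PowerSeries A)} →
      ∃ u : PowerSeries A, IsUnit u ∧
        aeval (Sum.elim p.1 p.2) (jacQ f) = (q : PowerSeries A) * u) ∧
    Function.Bijective
      (fun t : {w : Polynomial A × ((Fin n → PowerSeries A) × (Fin l → PowerSeries A)) //
          pairCond f x0 y0 w.2 ∧ qCond d w.1 ∧
          aeval (Sum.elim w.2.1 w.2.2) (jacQ f) ∈ Ideal.span {(w.1 : PowerSeries A)}} =>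
        (⟨t.val.2, t.prop.1⟩ :
          {p : (Fin n → PowerSeries A) × (Fin l → PowerSeries A) // pairCond f x0 y0 p})) := by
  obtain ⟨N, hN⟩ := hnil
  have : IsAdicComplete (maximalIdeal A) A := .of_pow_eq_bot hN
  have hQ : ∀ p, pairCond f x0 y0 p →
      ((aeval (Sum.elim p.1 p.2) (jacQ f)).map (residue A)).order = d := fun p hp => by
    rw [order_map_residue_aeval_of_pairCond hp, PowerSeries.order_eq_nat.mpr ⟨hord, hlow⟩]
  refine ⟨fun p hp => PowerSeries.existsUnique_qCond_and_mem_span (hQ p hp),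
    fun p q hp hq hmem => ?_, ?_, ?_⟩
  · obtain ⟨u, H⟩ := (PowerSeries.qCond_and_mem_span_iff (hQ p hp)).mp ⟨hq, hmem⟩
    exact ⟨u, H.isUnit, H.eq_mul⟩
  · rintro ⟨⟨q₁, p⟩, hp, hq₁⟩ ⟨⟨q₂, p'⟩, _, hq₂⟩ h
    obtain rfl : p = p' := congrArg Subtype.val h
    obtain rfl : q₁ = q₂ := (PowerSeries.existsUnique_qCond_and_mem_span (hQ p hp)).unique hq₁ hq₂
    rfl
  · rintro ⟨p, hp⟩
    obtain ⟨q, hq⟩ := (PowerSeries.existsUnique_qCond_and_mem_span (hQ p hp)).exists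
    exact ⟨⟨(q, p), hp, hq⟩, rfl⟩

/-- **Identification of deformations with solutions of the system (1)-(2).**
For every deformation `(x,y)` there is a unique monic `q` of degree `d`, `q ≡ tᵈ mod m`,
with `Q(x,y) ∈ qA[[t]]`; moreover `Q(x,y) = q·u` with `u` invertible.  Consequently
`(x,y) ↦ (q,x,y)` is a bijection onto the set of triples `(q,x,y)` as in the system
(1)-(2); equivalently, the projection `(q,x,y) ↦ (x,y)` is bijective. -/
theorem deformations_eq_solutions {k : Type*} [Field k] {n l : ℕ} (hn : 1 ≤ n) (hl : 1 ≤ l)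
    (f : Fin l → MvPolynomial (Fin n ⊕ Fin l) k)
    (x0 : Fin n → PowerSeries k) (y0 : Fin l → PowerSeries k)
    (hf0 : ∀ i, aeval (Sum.elim x0 y0) (f i) = 0)
    (hQ0 : aeval (Sum.elim x0 y0) (jacQ f) ≠ (0 : PowerSeries k))
    (d : ℕ)
    (hlow : ∀ j < d, PowerSeries.coeff j (aeval (Sum.elim x0 y0) (jacQ f)) = 0)
    (hord : PowerSeries.coeff d (aeval (Sum.elim x0 y0) (jacQ f)) ≠ 0)
    (A : Type*) [CommRing A] [Algebra k A] [IsLocalRing A]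
    (hnil : IsNilpotent (maximalIdeal A))
    (hres : Function.Bijective (algebraMap k (ResidueField A))) :
    (∀ p : (Fin n → PowerSeries A) × (Fin l → PowerSeries A), pairCond f x0 y0 p →
      ∃! q : Polynomial A, qCond d q ∧
        aeval (Sum.elim p.1 p.2) (jacQ f) ∈ Ideal.span {(q : PowerSeries A)}) ∧
    (∀ (p : (Fin n → PowerSeries A) × (Fin l → PowerSeries A)) (q : Polynomial A),
      pairCond f x0 y0 p → qCond d q →
      aeval (Sum.elim p.1 p.2) (jacQ f) ∈ Ideal.span {(q : PowerSeries A)} →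
      ∃ u : PowerSeries A, IsUnit u ∧
        aeval (Sum.elim p.1 p.2) (jacQ f) = (q : PowerSeries A) * u) ∧
    Function.Bijective
      (fun t : {w : Polynomial A × ((Fin n → PowerSeries A) × (Fin l → PowerSeries A)) //
          pairCond f x0 y0 w.2 ∧ qCond d w.1 ∧
          aeval (Sum.elim w.2.1 w.2.2) (jacQ f) ∈ Ideal.span {(w.1 : PowerSeries A)}} =>
        (⟨t.val.2, t.prop.1⟩ :
          {p : (Fin n → PowerSeries A) × (Fin l → PowerSeries A) // pairCond f x0 y0 p})) :=
  deformations_eq_solutions_general f x0 y0 d hlow hord A hnil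
end
end

section
/- (Example: arcs on the hypersurface y·x_{n+1} + g(x₁,…,xₙ) = 0.) Let A be a test ring with maximal ideal m. Then the set of tuples (x₁,…,xₙ,x_{n+1},y) with x_i ∈ m[[t]] for 1 ≤ i ≤ n, x_{n+1} ∈ t + m[[t]], y ∈ m[[t]], and y·x_{n+1} + g(x₁,…,xₙ) = 0 in A[[t]], is in bijection with the set of tuples (α, u, x̃₁,…,x̃ₙ, ξ₁,…,ξₙ) where α ∈ m, u ∈ 1 + m[[t]], x̃_i ∈ m[[t]], ξ_i ∈ m, and g(ξ₁,…,ξₙ) = 0. The bijection sends (α,u,x̃,ξ) to the tuple with x_{n+1} = (t−α)·u, x_i = ξ_i + (t−α)·x̃_i, and y the unique element of m[[t]] with y·x_{n+1} + g(x₁,…,xₙ) = 0. -/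
open IsLocalRing

noncomputable section

/-- Arcs on the hypersurface `y·x_{n+1} + g(x₁,…,xₙ) = 0` deforming the arc
`x_{n+1} = t`, `y = x₁ = … = xₙ = 0`:  tuples `(x, x_{n+1}, y)` with `x_i ∈ m[[t]]`,
`x_{n+1} ∈ t + m[[t]]`, `y ∈ m[[t]]`, satisfying the equation. -/
def arcSet {k : Type*} [Field k] {n : ℕ} (g : MvPolynomial (Fin n) k)
    (A : Type*) [CommRing A] [Algebra k A] [IsLocalRing A] :
    Set ((Fin n → PowerSeries A) × PowerSeries A × PowerSeries A) :=
  {p | (∀ i j, PowerSeries.coeff j (p.1 i) ∈ maximalIdeal A) ∧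
       (∀ j, PowerSeries.coeff j (p.2.1 - PowerSeries.X) ∈ maximalIdeal A) ∧
       (∀ j, PowerSeries.coeff j (p.2.2) ∈ maximalIdeal A) ∧
       p.2.2 * p.2.1 + MvPolynomial.aeval p.1 g = 0}

/-- Data `(α, u, x̃₁,…,x̃ₙ, ξ₁,…,ξₙ)` with `α ∈ m`, `u ∈ 1 + m[[t]]`, `x̃_i ∈ m[[t]]`,
`ξ_i ∈ m` and `g(ξ) = 0`. -/
def dataSet {k : Type*} [Field k] {n : ℕ} (g : MvPolynomial (Fin n) k)
    (A : Type*) [CommRing A] [Algebra k A] [IsLocalRing A] :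
    Set (A × PowerSeries A × (Fin n → PowerSeries A) × (Fin n → A)) :=
  {q | q.1 ∈ maximalIdeal A ∧
       (∀ j, PowerSeries.coeff j (q.2.1 - 1) ∈ maximalIdeal A) ∧
       (∀ i j, PowerSeries.coeff j (q.2.2.1 i) ∈ maximalIdeal A) ∧
       (∀ i, q.2.2.2 i ∈ maximalIdeal A) ∧
       MvPolynomial.aeval q.2.2.2 g = 0}

/-- The relation expressing that the arc `p = (x, x_{n+1}, y)` corresponds to the data
`(α, u, x̃, ξ)` by `x_{n+1} = (t−α)·u` and `x_i = ξ_i + (t−α)·x̃_i` (the component `y` is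
then uniquely determined by the equation). -/
def arcDataRel (k : Type*) [Field k] {n : ℕ}
    (A : Type*) [CommRing A] [Algebra k A] [IsLocalRing A]
    (q : A × PowerSeries A × (Fin n → PowerSeries A) × (Fin n → A))
    (p : (Fin n → PowerSeries A) × PowerSeries A × PowerSeries A) : Prop :=
  p.2.1 = (PowerSeries.X - PowerSeries.C q.1) * q.2.1 ∧
  ∀ i, p.1 i = PowerSeries.C (q.2.2.2 i) + (PowerSeries.X - PowerSeries.C q.1) * q.2.2.1 i

/-! Since `m` is nilpotent, `A` is `m`-adically complete, so Weierstrass division applies in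
`A⟦X⟧`: a series whose reduction modulo `m` is `X`, such as `x_{n+1}` or `t - α`, divides every
series with a unique constant remainder, is a non-zero-divisor, and (dividing `X` by it) factors
uniquely as `(t - α) * u` with `u ∈ 1 + m[[t]]`. Dividing each `x_i` by `t - α` produces `ξ_i` and
`x̃_i`; as `g(x) ≡ g(ξ) mod (t - α)`, the equation `y * x_{n+1} + g(x) = 0` can be solved for `y`,
necessarily uniquely, exactly when the constant remainder `g(ξ)` vanishes. -/

open PowerSeries
open scoped nonZeroDivisors

theorem isAdicComplete_of_isNilpotent {R M : Type*} [CommRing R] [AddCommGroup M] [Module R M]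
    {I : Ideal R} (hI : IsNilpotent I) : IsAdicComplete I M := by
  obtain ⟨N, hN⟩ := hI
  have hsmod : ∀ {x y : M}, x ≡ y [SMOD (I ^ N • ⊤ : Submodule R M)] → x = y := by
    intro x y h
    rwa [hN, zero_smul, Submodule.zero_eq_bot, SModEq.bot] at h
  refine { haus' := fun x hx => hsmod (hx N), prec' := fun f hf => ⟨f N, fun m => ?_⟩ }
  rcases le_total m N with h | h
  · exact hf h
  · rw [hsmod (hf h)]

theorem PowerSeries.C_add_X_mul_eq_zero_iff {R : Type*} [CommRing R] {a : R} {q : R⟦X⟧} :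
    C a + X * q = 0 ↔ a = 0 ∧ q = 0 := by
  refine ⟨fun h => ?_, fun ⟨ha, hq⟩ => by simp [ha, hq]⟩
  have ha : a = 0 := by simpa using congrArg constantCoeff h
  refine ⟨ha, X_mul_cancel ?_⟩
  simpa [ha] using h

section LocalRing

variable {A : Type*} [CommRing A] [IsLocalRing A]

theorem map_residue_eq_iff {f f' : A⟦X⟧} :
    map (residue A) f = map (residue A) f' ↔ ∀ j, coeff j (f - f') ∈ maximalIdeal A := by
  simp only [← sub_eq_zero (a := map _ f), ← map_sub, PowerSeries.ext_iff, coeff_map,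
    map_zero, residue_eq_zero_iff]

theorem isUnit_of_map_residue_eq_one {u : A⟦X⟧} (hu : map (residue A) u = 1) : IsUnit u := by
  refine isUnit_iff_constantCoeff.mpr ((residue_ne_zero_iff_isUnit _).mp ?_)
  have hu0 := congrArg (coeff 0) hu
  rw [coeff_map, coeff_zero_eq_constantCoeff_apply] at hu0
  simp [hu0]

theorem map_residue_eq_zero_iff {f : A⟦X⟧} :
    map (residue A) f = 0 ↔ ∀ j, coeff j f ∈ maximalIdeal A := by
  simpa using map_residue_eq_iff (f := f) (f' := 0)

theorem map_residue_X_sub_C {α : A} (hα : α ∈ maximalIdeal A) :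
    map (residue A) (X - C α) = X := by
  simp [(residue_eq_zero_iff α).mpr hα]

section MapResidueEqX

variable {g : A⟦X⟧} (hg : map (residue A) g = X)
include hg

theorem order_map_residue_toNat :
    (map (Ideal.Quotient.mk (maximalIdeal A)) g).order.toNat = 1 := by
  simp [show map (Ideal.Quotient.mk (maximalIdeal A)) g = X from hg]

theorem exists_eq_C_add_mul [IsAdicComplete (maximalIdeal A) A] (w : A⟦X⟧) :
    ∃ r q, w = C r + g * q := by
  have hg0 : map (residue A) g ≠ 0 := by simp [hg]
  obtain ⟨q, r, hdeg, hw⟩ := w.exists_isWeierstrassDivision hg0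
  rw [order_map_residue_toNat hg, Nat.cast_one] at hdeg
  refine ⟨r.coeff 0, q, ?_⟩
  rw [hw, Polynomial.eq_C_of_degree_le_zero (Order.le_of_lt_succ hdeg), Polynomial.coe_C, add_comm]
  simp

theorem eq_zero_of_mul_eq_C [IsHausdorff (maximalIdeal A) A] {q : A⟦X⟧} {r : A}
    (h : g * q = C r) : q = 0 ∧ r = 0 := by
  have hg0 : map (residue A) g ≠ 0 := by simp [hg]
  have hdiv : IsWeierstrassDivision 0 g (-q) (Polynomial.C r) := by
    refine ⟨?_, ?_⟩
    · rw [order_map_residue_toNat hg, Nat.cast_one]; exact Polynomial.degree_C_lt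
    · rw [Polynomial.coe_C, ← h]; ring
  obtain ⟨hq, hr⟩ := hdiv.eq_zero hg0
  exact ⟨neg_eq_zero.mp hq, Polynomial.C_eq_zero.mp hr⟩

theorem mem_nonZeroDivisors_of_map_residue_eq_X [IsHausdorff (maximalIdeal A) A] :
    g ∈ A⟦X⟧⁰ :=
  mem_nonZeroDivisors_iff_right.mpr fun q hq =>
    (eq_zero_of_mul_eq_C hg (by rw [mul_comm, hq, map_zero])).1

end MapResidueEqX

theorem exists_eq_X_sub_C_mul [IsAdicComplete (maximalIdeal A) A] {f : A⟦X⟧}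
    (hf : map (residue A) f = X) :
    ∃ α ∈ maximalIdeal A, ∃ u, map (residue A) u = 1 ∧ f = (X - C α) * u := by
  obtain ⟨α, q, hX⟩ := exists_eq_C_add_mul hf X
  have hmap : C (residue A α) + X * (map (residue A) q - 1) = 0 := by
    have := congrArg (map (residue A)) hX
    rw [map_add, map_mul, map_C, map_X, hf] at this
    linear_combination -this
  obtain ⟨hα, hq⟩ := C_add_X_mul_eq_zero_iff.mp hmap
  have hq1 : map (residue A) q = 1 := sub_eq_zero.mp hq
  obtain ⟨v, hv⟩ := (isUnit_of_map_residue_eq_one hq1).exists_right_inv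
  refine ⟨α, (residue_eq_zero_iff α).mp hα, v, ?_, ?_⟩
  · simpa [hq1] using congrArg (map (residue A)) hv
  · linear_combination (-v) * hX - f * hv

theorem eq_of_X_sub_C_mul_eq_X_sub_C_mul [IsHausdorff (maximalIdeal A) A] {α α' : A}
    (hα : α ∈ maximalIdeal A) {u u' : A⟦X⟧} (hu' : IsUnit u')
    (h : (X - C α) * u = (X - C α') * u') : α = α' ∧ u = u' := by
  obtain ⟨v, hv⟩ := hu'.exists_right_inv
  have key : (X - C α) * ((u - u') * v) = C (α - α') := by
    rw [map_sub]
    linear_combination v * h + (C α - C α') * hv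
  obtain ⟨h1, h2⟩ := eq_zero_of_mul_eq_C (map_residue_X_sub_C hα) key
  exact ⟨sub_eq_zero.mp h2, sub_eq_zero.mp (by linear_combination u' * h1 - (u - u') * hv)⟩

end LocalRing

theorem MvPolynomial.aeval_sub_aeval_mem {R B σ : Type*} [CommSemiring R] [CommRing B]
    [Algebra R B] (I : Ideal B) {x x' : σ → B} (h : ∀ i, x i - x' i ∈ I) (p : MvPolynomial σ R) :
    aeval x p - aeval x' p ∈ I := by
  refine Ideal.Quotient.eq.mp ?_
  simp only [MvPolynomial.map_aeval, Ideal.Quotient.eq.mpr (h _)]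

section Aeval

variable {k σ A : Type*} [CommSemiring k] [CommRing A] [Algebra k A]

theorem aeval_C_add_mul_sub_mem_span (p : MvPolynomial σ k) (d : A⟦X⟧) (ξ : σ → A)
    (x : σ → A⟦X⟧) :
    MvPolynomial.aeval (fun i => C (ξ i) + d * x i) p - C (MvPolynomial.aeval ξ p)
      ∈ Ideal.span {d} := by
  rw [← PowerSeries.algebraMap_eq, ← MvPolynomial.aeval_algebraMap_apply]
  refine MvPolynomial.aeval_sub_aeval_mem _ (fun i => ?_) p
  simp [Ideal.mem_span_singleton]

theorem map_residue_aeval_eq_zero [IsLocalRing A] {p : MvPolynomial σ k}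
    (hp : MvPolynomial.constantCoeff p = 0) {x : σ → A⟦X⟧}
    (hx : ∀ i, map (residue A) (x i) = 0) : map (residue A) (MvPolynomial.aeval x p) = 0 := by
  simp [MvPolynomial.map_aeval, hx, hp]

end Aeval

section Arcs

variable {k : Type*} [Field k] {n : ℕ} {g : MvPolynomial (Fin n) k}
  {A : Type*} [CommRing A] [Algebra k A] [IsLocalRing A]

theorem mem_arcSet_iff {p : (Fin n → A⟦X⟧) × A⟦X⟧ × A⟦X⟧} :
    p ∈ arcSet g A ↔ (∀ i, map (residue A) (p.1 i) = 0) ∧ map (residue A) p.2.1 = X ∧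
      map (residue A) p.2.2 = 0 ∧ p.2.2 * p.2.1 + MvPolynomial.aeval p.1 g = 0 := by
  have hX := map_residue_eq_iff (f := p.2.1) (f' := X)
  rw [map_X] at hX
  simp only [arcSet, Set.mem_ofPred_eq, hX, map_residue_eq_zero_iff]

theorem mem_dataSet_iff {q : A × A⟦X⟧ × (Fin n → A⟦X⟧) × (Fin n → A)} :
    q ∈ dataSet g A ↔ q.1 ∈ maximalIdeal A ∧ map (residue A) q.2.1 = 1 ∧
      (∀ i, map (residue A) (q.2.2.1 i) = 0) ∧ (∀ i, q.2.2.2 i ∈ maximalIdeal A) ∧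
      MvPolynomial.aeval q.2.2.2 g = 0 := by
  have h1 := map_residue_eq_iff (f := q.2.1) (f' := 1)
  rw [map_one] at h1
  simp only [dataSet, Set.mem_ofPred_eq, h1, map_residue_eq_zero_iff]

theorem exists_mem_arcSet_arcDataRel (hg : MvPolynomial.constantCoeff g = 0)
    {q : A × A⟦X⟧ × (Fin n → A⟦X⟧) × (Fin n → A)} (hq : q ∈ dataSet g A) :
    ∃ p ∈ arcSet g A, arcDataRel k A q p := by
  obtain ⟨α, u, z, ξ⟩ := q
  obtain ⟨hα, hu, hz, hξ, hgξ⟩ := mem_dataSet_iff.mp hq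
  set x : Fin n → A⟦X⟧ := fun i => C (ξ i) + (X - C α) * z i
  have hX := map_residue_X_sub_C hα
  have hx : ∀ i, map (residue A) (x i) = 0 := fun i => by
    simp [x, hX, hz i, (residue_eq_zero_iff _).mpr (hξ i)]
  obtain ⟨h, hh⟩ : X - C α ∣ MvPolynomial.aeval x g := by
    simpa [hgξ] using Ideal.mem_span_singleton.mp (aeval_C_add_mul_sub_mem_span g (X - C α) ξ z)
  have hh0 : map (residue A) h = 0 := by
    have := congrArg (map (residue A)) hh
    rw [map_residue_aeval_eq_zero hg hx, map_mul, hX] at this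
    exact X_mul_cancel (by rw [← this, mul_zero])
  obtain ⟨v, hv⟩ := (isUnit_of_map_residue_eq_one hu).exists_right_inv
  refine ⟨(x, (X - C α) * u, -(h * v)), mem_arcSet_iff.mpr ⟨hx, ?_, ?_, ?_⟩, rfl, fun i => rfl⟩
  · simp [hX, hu]
  · simp [hh0]
  · dsimp only
    rw [hh]
    linear_combination (-(X - C α) * h) * hv

theorem eq_of_arcDataRel_of_mem_arcSet [IsHausdorff (maximalIdeal A) A]
    {q : A × A⟦X⟧ × (Fin n → A⟦X⟧) × (Fin n → A)} {p p' : (Fin n → A⟦X⟧) × A⟦X⟧ × A⟦X⟧}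
    (hp : p ∈ arcSet g A) (hp' : p' ∈ arcSet g A)
    (h : arcDataRel k A q p) (h' : arcDataRel k A q p') : p = p' := by
  obtain ⟨x, f, y⟩ := p
  obtain ⟨x', f', y'⟩ := p'
  obtain ⟨-, hf, -, heq⟩ := mem_arcSet_iff.mp hp
  obtain ⟨-, -, -, heq'⟩ := mem_arcSet_iff.mp hp'
  dsimp only at hf heq heq' h h'
  obtain rfl : f' = f := h'.1.trans h.1.symm
  obtain rfl : x' = x := funext fun i => (h'.2 i).trans (h.2 i).symm
  have hy : y' * f' = y * f' := by linear_combination heq' - heq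
  have hnz : f' ∈ A⟦X⟧⁰ := mem_nonZeroDivisors_of_map_residue_eq_X hf
  obtain rfl := (mul_cancel_right_mem_nonZeroDivisors hnz).mp hy
  rfl

theorem exists_mem_dataSet_arcDataRel [IsAdicComplete (maximalIdeal A) A]
    {p : (Fin n → A⟦X⟧) × A⟦X⟧ × A⟦X⟧} (hp : p ∈ arcSet g A) :
    ∃ q ∈ dataSet g A, arcDataRel k A q p := by
  obtain ⟨x, f, y⟩ := p
  obtain ⟨hx, hf, -, heq⟩ := mem_arcSet_iff.mp hp
  obtain ⟨α, hα, u, hu, rfl⟩ := exists_eq_X_sub_C_mul hf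
  have hX := map_residue_X_sub_C hα
  choose ξ z hdiv using fun i => exists_eq_C_add_mul hX (x i)
  have hres : ∀ i, residue A (ξ i) = 0 ∧ map (residue A) (z i) = 0 := fun i =>
    C_add_X_mul_eq_zero_iff.mp
      (by simpa [hX, hx i] using (congrArg (map (residue A)) (hdiv i)).symm)
  have hgξ : MvPolynomial.aeval ξ g = 0 := by
    have hmod := aeval_C_add_mul_sub_mem_span g (X - C α) ξ z
    rw [← funext hdiv] at hmod
    have hx0 : MvPolynomial.aeval x g ∈ Ideal.span {X - C α} :=
      Ideal.mem_span_singleton.mpr ⟨-(y * u), by linear_combination heq⟩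
    obtain ⟨w, hw⟩ := Ideal.mem_span_singleton.mp
      (by simpa only [sub_sub_cancel] using sub_mem hx0 hmod)
    exact (eq_zero_of_mul_eq_C hX hw.symm).2
  exact ⟨(α, u, z, ξ), mem_dataSet_iff.mpr ⟨hα, hu, fun i => (hres i).2,
    fun i => (residue_eq_zero_iff _).mp (hres i).1, hgξ⟩, rfl, hdiv⟩

theorem eq_of_arcDataRel_of_mem_dataSet [IsHausdorff (maximalIdeal A) A]
    {q q' : A × A⟦X⟧ × (Fin n → A⟦X⟧) × (Fin n → A)} {p : (Fin n → A⟦X⟧) × A⟦X⟧ × A⟦X⟧}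
    (hq : q ∈ dataSet g A) (hq' : q' ∈ dataSet g A)
    (h : arcDataRel k A q p) (h' : arcDataRel k A q' p) : q = q' := by
  obtain ⟨α, u, z, ξ⟩ := q
  obtain ⟨α', u', z', ξ'⟩ := q'
  obtain ⟨hα, -, -, -, -⟩ := mem_dataSet_iff.mp hq
  obtain ⟨-, hu', -, -, -⟩ := mem_dataSet_iff.mp hq'
  obtain ⟨rfl, rfl⟩ :=
    eq_of_X_sub_C_mul_eq_X_sub_C_mul hα (isUnit_of_map_residue_eq_one hu') (h.1.symm.trans h'.1)
  have key : ∀ i, z i - z' i = 0 ∧ ξ' i - ξ i = 0 := fun i => by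
    refine eq_zero_of_mul_eq_C (map_residue_X_sub_C hα) ?_
    rw [map_sub]
    linear_combination h'.2 i - h.2 i
  obtain rfl : z = z' := funext fun i => sub_eq_zero.mp (key i).1
  obtain rfl : ξ = ξ' := funext fun i => (sub_eq_zero.mp (key i).2).symm
  rfl

end Arcs

theorem hypersurface_arc_bijection_general {k : Type*} [Field k] {n : ℕ}
    (g : MvPolynomial (Fin n) k) (hg : MvPolynomial.constantCoeff g = 0)
    (A : Type*) [CommRing A] [Algebra k A] [IsLocalRing A]
    (hnil : IsNilpotent (maximalIdeal A)) :
    (∀ q ∈ dataSet g A, ∃! p, p ∈ arcSet g A ∧ arcDataRel k A q p) ∧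
    (∀ p ∈ arcSet g A, ∃! q, q ∈ dataSet g A ∧ arcDataRel k A q p) := by
  have := isAdicComplete_of_isNilpotent (M := A) hnil
  constructor
  · intro q hq
    obtain ⟨p, hp, hqp⟩ := exists_mem_arcSet_arcDataRel hg hq
    exact ⟨p, ⟨hp, hqp⟩, fun p' ⟨hp', hqp'⟩ => eq_of_arcDataRel_of_mem_arcSet hp' hp hqp' hqp⟩
  · intro p hp
    obtain ⟨q, hq, hqp⟩ := exists_mem_dataSet_arcDataRel hp
    exact ⟨q, ⟨hq, hqp⟩, fun q' ⟨hq', hqp'⟩ => eq_of_arcDataRel_of_mem_dataSet hq' hq hqp' hqp⟩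

/-- **Example: arcs on the hypersurface `y·x_{n+1} + g(x₁,…,xₙ) = 0`.**
Over a test ring `A`, the set of solutions `(x, x_{n+1}, y)` with `x_i ∈ m[[t]]`,
`x_{n+1} ∈ t + m[[t]]`, `y ∈ m[[t]]` is in bijection with the set of tuples
`(α, u, x̃, ξ)` with `α ∈ m`, `u ∈ 1 + m[[t]]`, `x̃_i ∈ m[[t]]`, `ξ_i ∈ m`, `g(ξ) = 0`;
the bijection sends `(α,u,x̃,ξ)` to the tuple with `x_{n+1} = (t−α)·u`,
`x_i = ξ_i + (t−α)·x̃_i`, and `y` the unique solution of the equation. -/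
theorem hypersurface_arc_bijection {k : Type*} [Field k] {n : ℕ} (hn : 1 ≤ n)
    (g : MvPolynomial (Fin n) k) (hg : MvPolynomial.constantCoeff g = 0)
    (A : Type*) [CommRing A] [Algebra k A] [IsLocalRing A]
    (hnil : IsNilpotent (maximalIdeal A))
    (hres : Function.Bijective (algebraMap k (ResidueField A))) :
    (∀ q ∈ dataSet g A, ∃! p, p ∈ arcSet g A ∧ arcDataRel k A q p) ∧
    (∀ p ∈ arcSet g A, ∃! q, q ∈ dataSet g A ∧ arcDataRel k A q p) :=
  hypersurface_arc_bijection_general g hg A hnil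
end
end

section
/- (Uniqueness and solvability criterion for y in the example.) Let A be a test ring with maximal ideal m, α ∈ m, u ∈ A[[t]] invertible, and set x_{n+1} := (t−α)·u ∈ A[[t]]. Let x₁,…,xₙ ∈ m[[t]]. Then there is at most one y ∈ m[[t]] with y·x_{n+1} + g(x₁,…,xₙ) = 0, and such y exists if and only if g(x₁(α),…,xₙ(α)) = 0, where x_i(α) ∈ m denotes the image of x_i under the A-algebra homomorphism A[[t]] → A sending t to α (well defined because α is nilpotent). -/
/-!
Since `α ^ N = 0`, evaluation at `α` only sees the first `N` coefficients, so it is an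
`A`-algebra map `A⟦X⟧ → A` killing `X - C α`. Conversely `X - C α` divides
`X ^ N = X ^ N - (C α) ^ N`, hence is a non-zero-divisor, and it divides every `f` in the kernel:
`f = X ^ N * s + trunc N f`, and `α` is a root of the polynomial `trunc N f`.
The quotient lies in `m⟦X⟧` because modulo `m` the equation `(X - C α) * q = g(x)` reads
`X * q = 0`.
-/

open IsLocalRing PowerSeries

namespace PowerSeries

variable {A : Type*} [CommRing A] {α : A} {N : ℕ}

theorem eval_trunc_coe (hN : α ^ N = 0) (p : Polynomial A) :
    (trunc N (p : A⟦X⟧)).eval α = p.eval α := by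
  obtain ⟨r, hr⟩ : Polynomial.X ^ N ∣ p - trunc N (p : A⟦X⟧) :=
    Polynomial.X_pow_dvd_iff.2 fun d hd => by simp [coeff_trunc, hd]
  have h := congrArg (Polynomial.eval α) hr
  rw [Polynomial.eval_sub, Polynomial.eval_mul, Polynomial.eval_pow, Polynomial.eval_X, hN,
    zero_mul, sub_eq_zero] at h
  exact h.symm

variable (α N) in
noncomputable def truncEval (hN : α ^ N = 0) : A⟦X⟧ →ₐ[A] A where
  toFun f := (trunc N f).eval α
  map_one' := by simpa using eval_trunc_coe hN 1
  map_zero' := by simp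
  map_add' f g := by simp
  map_mul' f g := by
    rw [← trunc_trunc_mul_trunc, ← Polynomial.coe_mul, eval_trunc_coe hN, Polynomial.eval_mul]
  commutes' a := by simpa using eval_trunc_coe hN (Polynomial.C a)

theorem truncEval_coe (hN : α ^ N = 0) (p : Polynomial A) : truncEval α N hN p = p.eval α :=
  eval_trunc_coe hN p

theorem X_sub_C_dvd_X_pow (hN : α ^ N = 0) : X - C α ∣ (X ^ N : A⟦X⟧) := by
  simpa [← map_pow, hN] using sub_dvd_pow_sub_pow (X : A⟦X⟧) (C α) N

theorem isRegular_X_sub_C (hN : α ^ N = 0) : IsRegular (X - C α : A⟦X⟧) := by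
  obtain ⟨c, hc⟩ := X_sub_C_dvd_X_pow hN
  have hXN : IsRegular (X ^ N : A⟦X⟧) :=
    (Commute.isRegular_iff fun _ => Commute.all _ _).2 fun _ _ => X_pow_mul_cancel
  exact (hc ▸ hXN).of_mul_left

theorem X_sub_C_dvd_iff_truncEval_eq_zero (hN : α ^ N = 0) {f : A⟦X⟧} :
    X - C α ∣ f ↔ truncEval α N hN f = 0 := by
  constructor
  · rintro ⟨q, rfl⟩
    have h := truncEval_coe hN (Polynomial.X - Polynomial.C α)
    simp only [Polynomial.coe_sub, Polynomial.coe_X, Polynomial.coe_C, Polynomial.eval_sub,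
      Polynomial.eval_X, Polynomial.eval_C, sub_self] at h
    rw [map_mul, h, zero_mul]
  · intro hf
    have hroot : X - C α ∣ (trunc N f : A⟦X⟧) := by
      simpa using map_dvd (Polynomial.coeToPowerSeries.ringHom (R := A))
        (Polynomial.dvd_iff_isRoot.2 hf)
    rw [eq_X_pow_mul_shift_add_trunc N f]
    exact dvd_add (dvd_mul_of_dvd_left (X_sub_C_dvd_X_pow hN) _) hroot

theorem forall_coeff_mem_iff_map_eq_zero (I : Ideal A) (f : A⟦X⟧) :
    (∀ j, coeff j f ∈ I) ↔ map (Ideal.Quotient.mk I) f = 0 := by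
  simp [PowerSeries.ext_iff, Ideal.Quotient.eq_zero_iff_mem]

theorem coeff_mem_of_coeff_X_sub_C_mul_mem {I : Ideal A} (hα : α ∈ I) {q : A⟦X⟧}
    (h : ∀ j, coeff j ((X - C α) * q) ∈ I) (j : ℕ) : coeff j q ∈ I := by
  revert j
  rw [forall_coeff_mem_iff_map_eq_zero] at h ⊢
  apply X_mul_cancel
  simpa [Ideal.Quotient.eq_zero_iff_mem.2 hα] using h

theorem coeff_aeval_mem {k σ : Type*} [CommSemiring k] [Algebra k A] {I : Ideal A}
    {x : σ → A⟦X⟧} (hx : ∀ i j, coeff j (x i) ∈ I) {g : MvPolynomial σ k}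
    (hg : MvPolynomial.constantCoeff g = 0) (j : ℕ) : coeff j (MvPolynomial.aeval x g) ∈ I := by
  revert j
  have hx0 : (fun i => map (Ideal.Quotient.mk I) (x i)) = 0 :=
    funext fun i => (forall_coeff_mem_iff_map_eq_zero I (x i)).1 (hx i)
  rw [forall_coeff_mem_iff_map_eq_zero]
  calc map (Ideal.Quotient.mk I) (MvPolynomial.aeval x g)
      = MvPolynomial.aeval (fun i => map (Ideal.Quotient.mk I) (x i)) g :=
        MvPolynomial.comp_aeval_apply (f := x) (mapAlgHom (Ideal.Quotient.mkₐ k I)) g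
    _ = 0 := by rw [hx0, MvPolynomial.aeval_zero, hg, map_zero]

end PowerSeries

theorem hypersurface_example_solvability_general {k : Type*} [Field k] {n : ℕ}
    (g : MvPolynomial (Fin n) k) (hg : MvPolynomial.constantCoeff g = 0)
    (A : Type*) [CommRing A] [Algebra k A] [IsLocalRing A]
    (α : A) (hα : α ∈ maximalIdeal A) (N : ℕ) (hN : α ^ N = 0)
    (u : PowerSeries A) (hu : IsUnit u)
    (x : Fin n → PowerSeries A)
    (hx : ∀ i j, PowerSeries.coeff j (x i) ∈ maximalIdeal A) :
    (∀ y y' : PowerSeries A,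
      ((∀ j, PowerSeries.coeff j y ∈ maximalIdeal A) ∧
        y * ((PowerSeries.X - PowerSeries.C α) * u) + MvPolynomial.aeval x g = 0) →
      ((∀ j, PowerSeries.coeff j y' ∈ maximalIdeal A) ∧
        y' * ((PowerSeries.X - PowerSeries.C α) * u) + MvPolynomial.aeval x g = 0) →
      y = y') ∧
    ((∃ y : PowerSeries A,
        (∀ j, PowerSeries.coeff j y ∈ maximalIdeal A) ∧
        y * ((PowerSeries.X - PowerSeries.C α) * u) + MvPolynomial.aeval x g = 0) ↔
      MvPolynomial.aeval (fun i => Polynomial.eval α (PowerSeries.trunc N (x i))) g = 0) := by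
  have hreg : IsRegular ((X - C α) * u) := (isRegular_X_sub_C hN).mul hu.isRegular
  refine ⟨fun y y' hy hy' => hreg.right (by linear_combination hy.2 - hy'.2), ?_⟩
  have heval : truncEval α N hN (MvPolynomial.aeval x g) =
      MvPolynomial.aeval (fun i => Polynomial.eval α (trunc N (x i))) g :=
    MvPolynomial.comp_aeval_apply (f := x) ((truncEval α N hN).restrictScalars k) g
  rw [← heval, ← X_sub_C_dvd_iff_truncEval_eq_zero]
  constructor
  · rintro ⟨y, -, hy⟩
    exact ⟨-(y * u), by linear_combination hy⟩
  · rintro ⟨q, hq⟩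
    obtain ⟨v, rfl⟩ := hu
    have hqm : ∀ j, coeff j q ∈ maximalIdeal A :=
      coeff_mem_of_coeff_X_sub_C_mul_mem hα (hq ▸ coeff_aeval_mem hx hg)
    refine ⟨-(q * ↑v⁻¹), ?_, ?_⟩
    · rw [forall_coeff_mem_iff_map_eq_zero] at hqm ⊢
      simp [hqm]
    · linear_combination (-(X - C α) * q) * v.inv_mul + hq

/-- **Uniqueness and solvability criterion for `y` in the example.**
Let `A` be a test ring with maximal ideal `m`, `α ∈ m`, `u ∈ A[[t]]` invertible, and
`x_{n+1} := (t−α)·u`.  Let `x₁,…,xₙ ∈ m[[t]]`.  Then there is at most one `y ∈ m[[t]]`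
with `y·x_{n+1} + g(x₁,…,xₙ) = 0`, and such `y` exists iff `g(x₁(α),…,xₙ(α)) = 0`,
where `x_i(α)` is the image of `x_i` under the `A`-algebra map `A[[t]] → A`, `t ↦ α`
(computed via truncation, using that `α` is nilpotent: `α^N = 0`). -/
theorem hypersurface_example_solvability {k : Type*} [Field k] {n : ℕ} (hn : 1 ≤ n)
    (g : MvPolynomial (Fin n) k) (hg : MvPolynomial.constantCoeff g = 0)
    (A : Type*) [CommRing A] [Algebra k A] [IsLocalRing A]
    (hnil : IsNilpotent (maximalIdeal A))
    (hres : Function.Bijective (algebraMap k (ResidueField A)))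
    (α : A) (hα : α ∈ maximalIdeal A) (N : ℕ) (hN : α ^ N = 0)
    (u : PowerSeries A) (hu : IsUnit u)
    (x : Fin n → PowerSeries A)
    (hx : ∀ i j, PowerSeries.coeff j (x i) ∈ maximalIdeal A) :
    (∀ y y' : PowerSeries A,
      ((∀ j, PowerSeries.coeff j y ∈ maximalIdeal A) ∧
        y * ((PowerSeries.X - PowerSeries.C α) * u) + MvPolynomial.aeval x g = 0) →
      ((∀ j, PowerSeries.coeff j y' ∈ maximalIdeal A) ∧
        y' * ((PowerSeries.X - PowerSeries.C α) * u) + MvPolynomial.aeval x g = 0) →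
      y = y') ∧
    ((∃ y : PowerSeries A,
        (∀ j, PowerSeries.coeff j y ∈ maximalIdeal A) ∧
        y * ((PowerSeries.X - PowerSeries.C α) * u) + MvPolynomial.aeval x g = 0) ↔
      MvPolynomial.aeval (fun i => Polynomial.eval α (PowerSeries.trunc N (x i))) g = 0) :=
  hypersurface_example_solvability_general g hg A α hα N hN u hu x hx
end

section
/- (The adjugate congruence is independent of the choice of lift.) Let R be a commutative k-algebra, r ≥ 2 an integer, q ∈ R, x ∈ Rⁿ, and y, y' ∈ Rˡ such that y'_j − y_j lies in the ideal (q^{r-1}) for every j. Assume that every component of f(x,y) lies in the ideal (q^{r-1}) and that Q(x,y) lies in the ideal (q). Then every component of Ĉ(x,y')·f(x,y') − Ĉ(x,y)·f(x,y) lies in the ideal (q^{r}). -/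
/-! Write `d = q^(r-1)`, `δ = y' - y`, `A = C(x,y)` and `A' = C(x,y')`. First-order Taylor
expansion gives `f(x,y') ≡ f(x,y) + A δ (mod d²)`, and `A' ≡ A (mod d)`, hence also
`adj A' ≡ adj A` and `det A' ≡ det A (mod d)`. In

    adj A' f(x,y') - adj A f(x,y) = adj A' (f(x,y') - f(x,y) - A δ)
      + (adj A' - adj A) f(x,y) + adj A' (A - A') δ + det A' δ

the first three terms lie in `(d²)`, and the last in `(d²) + (q d)` because `det A ∈ (q)`.
Both ideals are contained in `(q^r)` since `r ≥ 2`. -/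

open MvPolynomial Matrix

noncomputable section

theorem sumElim_sub_sumElim_mem {ι κ R : Type*} [CommRing R] {I : Ideal R} (x : ι → R)
    {y y' : κ → R} (hyy' : ∀ j, y' j - y j ∈ I) (s : ι ⊕ κ) :
    Sum.elim x y' s - Sum.elim x y s ∈ I := by
  rcases s with a | j <;> simp [hyy']

namespace MvPolynomial

variable {σ k R : Type*} [Fintype σ] [DecidableEq σ] [CommSemiring k] [CommRing R] [Algebra k R]
  {I : Ideal R} {v w : σ → R}

theorem aeval_taylor_remainder_mem_sq (hvw : ∀ s, w s - v s ∈ I) (g : MvPolynomial σ k) :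
    aeval w g - aeval v g - ∑ s, aeval v (pderiv s g) * (w s - v s) ∈ I ^ 2 := by
  induction g using MvPolynomial.induction_on with
  | C a => simp
  | add p p' hp hp' =>
    convert add_mem hp hp' using 1
    simp only [map_add, add_mul, Finset.sum_add_distrib]
    ring
  | mul_X p i hp =>
    set S := ∑ s, aeval v (pderiv s p) * (w s - v s)
    have hS : S ∈ I := Ideal.sum_mem _ fun s _ => I.mul_mem_left _ (hvw s)
    have hp₁ : aeval w p - aeval v p ∈ I := by
      simpa using add_mem (Ideal.pow_le_self two_ne_zero hp) hS
    have hsum : ∑ s, aeval v (pderiv s (p * X i)) * (w s - v s) =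
        S * v i + aeval v p * (w i - v i) := by
      simp only [pderiv_mul, pderiv_X, map_add, _root_.map_mul, aeval_X, add_mul,
        Finset.sum_add_distrib, Pi.single_apply, S, Finset.sum_mul]
      congr 1
      · exact Finset.sum_congr rfl fun s _ => by ring
      · simp
    have hquad : (aeval w p - aeval v p) * (w i - v i) ∈ I ^ 2 :=
      sq I ▸ Ideal.mul_mem_mul hp₁ (hvw i)
    rw [_root_.map_mul, _root_.map_mul, aeval_X, aeval_X, hsum]
    convert add_mem hquad ((I ^ 2).mul_mem_left (v i) hp) using 1
    ring

theorem aeval_sub_aeval_mem_s7 (hvw : ∀ s, w s - v s ∈ I) (g : MvPolynomial σ k) :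
    aeval w g - aeval v g ∈ I := by
  have hS : ∑ s, aeval v (pderiv s g) * (w s - v s) ∈ I :=
    Ideal.sum_mem _ fun s _ => I.mul_mem_left _ (hvw s)
  simpa using add_mem (Ideal.pow_le_self two_ne_zero (aeval_taylor_remainder_mem_sq hvw g)) hS

theorem aeval_sumElim_taylor_remainder_mem_sq {ι κ : Type*} [Fintype ι] [Fintype κ]
    [DecidableEq ι] [DecidableEq κ] (x : ι → R) {y y' : κ → R} (hyy' : ∀ j, y' j - y j ∈ I)
    (g : MvPolynomial (ι ⊕ κ) k) :
    aeval (Sum.elim x y') g - aeval (Sum.elim x y) g -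
      ∑ j, aeval (Sum.elim x y) (pderiv (Sum.inr j) g) * (y' j - y j) ∈ I ^ 2 := by
  simpa [Fintype.sum_sum_type] using
    aeval_taylor_remainder_mem_sq (sumElim_sub_sumElim_mem x hyy') g

end MvPolynomial

namespace Matrix

variable {ι R : Type*} [Fintype ι] [CommRing R] {I J : Ideal R}

theorem mulVec_apply_mem {v : ι → R} (hv : ∀ j, v j ∈ I) (M : Matrix ι ι R) (i : ι) :
    (M *ᵥ v) i ∈ I :=
  Ideal.sum_mem _ fun j _ => I.mul_mem_left _ (hv j)

theorem mulVec_apply_mem_mul {M : Matrix ι ι R} {v : ι → R} (hM : ∀ i j, M i j ∈ I)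
    (hv : ∀ j, v j ∈ J) (i : ι) : (M *ᵥ v) i ∈ I * J :=
  Ideal.sum_mem _ fun j _ => Ideal.mul_mem_mul (hM i j) (hv j)

variable [DecidableEq ι]

theorem mapMatrix_mk_eq_of_sub_mem {A B : Matrix ι ι R} (h : ∀ i j, B i j - A i j ∈ I) :
    (Ideal.Quotient.mk I).mapMatrix B = (Ideal.Quotient.mk I).mapMatrix A := by
  ext i j
  exact Ideal.Quotient.eq.mpr (h i j)

theorem det_sub_det_mem {A B : Matrix ι ι R} (h : ∀ i j, B i j - A i j ∈ I) :
    B.det - A.det ∈ I := by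
  rw [← Ideal.Quotient.eq, RingHom.map_det, RingHom.map_det, mapMatrix_mk_eq_of_sub_mem h]

theorem adjugate_sub_adjugate_mem {A B : Matrix ι ι R} (h : ∀ i j, B i j - A i j ∈ I)
    (i j : ι) : B.adjugate i j - A.adjugate i j ∈ I := by
  rw [← Ideal.Quotient.eq]
  have := congrFun₂ (congrArg adjugate (mapMatrix_mk_eq_of_sub_mem h)) i j
  rwa [← RingHom.map_adjugate, ← RingHom.map_adjugate] at this

theorem adjugate_mulVec_sub_adjugate_mulVec (A A' : Matrix ι ι R) (F F' δ : ι → R) :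
    A'.adjugate *ᵥ F' - A.adjugate *ᵥ F =
      A'.adjugate *ᵥ (F' - F - A *ᵥ δ) + (A'.adjugate - A.adjugate) *ᵥ F +
        A'.adjugate *ᵥ ((A - A') *ᵥ δ) + A'.det • δ := by
  rw [mulVec_sub, mulVec_sub, sub_mulVec, sub_mulVec, mulVec_sub, mulVec_mulVec, mulVec_mulVec,
    adjugate_mul, smul_mulVec, one_mulVec]
  abel

theorem adjugate_mulVec_sub_adjugate_mulVec_mem {A A' : Matrix ι ι R} {F F' δ : ι → R}
    (hA : ∀ i j, A' i j - A i j ∈ I) (hδ : ∀ j, δ j ∈ I) (hF : ∀ j, F j ∈ I)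
    (hF' : ∀ j, F' j - F j - (A *ᵥ δ) j ∈ I ^ 2) (hdet : A.det ∈ J) (i : ι) :
    (A'.adjugate *ᵥ F' - A.adjugate *ᵥ F) i ∈ I ^ 2 ⊔ J * I := by
  rw [sq] at hF' ⊢
  have hAA' : ∀ i j, (A - A') i j ∈ I := fun i j => by simpa using I.neg_mem (hA i j)
  have hdet' : A'.det = A.det + (A'.det - A.det) := by ring
  rw [adjugate_mulVec_sub_adjugate_mulVec A A' F F' δ, Pi.add_apply, Pi.add_apply,
    Pi.add_apply, Pi.smul_apply, smul_eq_mul, hdet', add_mul]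
  refine add_mem (add_mem (add_mem ?_ ?_) ?_) (add_mem ?_ ?_)
  · exact Ideal.mem_sup_left (mulVec_apply_mem hF' _ i)
  · exact Ideal.mem_sup_left
      (mulVec_apply_mem_mul (adjugate_sub_adjugate_mem hA) hF i)
  · exact Ideal.mem_sup_left (mulVec_apply_mem (mulVec_apply_mem_mul hAA' hδ) _ i)
  · exact Ideal.mem_sup_right (Ideal.mul_mem_mul hdet (hδ i))
  · exact Ideal.mem_sup_left (Ideal.mul_mem_mul (det_sub_det_mem hA) (hδ i))

end Matrix

theorem adjugate_mulVec_f_congr_general {k : Type*} [Field k] {n l : ℕ}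
    (f : Fin l → MvPolynomial (Fin n ⊕ Fin l) k)
    {R : Type*} [CommRing R] [Algebra k R] (r : ℕ) (hr : 2 ≤ r)
    (q : R) (x : Fin n → R) (y y' : Fin l → R)
    (hyy' : ∀ j, y' j - y j ∈ Ideal.span {q ^ (r - 1)})
    (hf : ∀ i, aeval (Sum.elim x y) (f i) ∈ Ideal.span {q ^ (r - 1)})
    (hQ : aeval (Sum.elim x y) (jacQ f) ∈ Ideal.span {q}) :
    ∀ i,
      (Matrix.of fun i' j' => aeval (Sum.elim x y') (jacC f i' j')).adjugate.mulVec
          (fun i' => aeval (Sum.elim x y') (f i')) i -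
        (Matrix.of fun i' j' => aeval (Sum.elim x y) (jacC f i' j')).adjugate.mulVec
          (fun i' => aeval (Sum.elim x y) (f i')) i ∈ Ideal.span {q ^ r} := by
  have hdet := AlgHom.map_det (aeval (Sum.elim x y)) (jacC f) ▸ hQ
  have hle : Ideal.span {q ^ (r - 1)} ^ 2 ⊔ Ideal.span {q} * Ideal.span {q ^ (r - 1)} ≤
      Ideal.span {q ^ r} := by
    rw [Ideal.span_singleton_pow, Ideal.span_singleton_mul_span_singleton, sup_le_iff,
      Ideal.span_singleton_le_span_singleton, Ideal.span_singleton_le_span_singleton,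
      ← pow_mul, ← pow_succ']
    exact ⟨pow_dvd_pow q (by omega), pow_dvd_pow q (by omega)⟩
  exact fun i => hle (adjugate_mulVec_sub_adjugate_mulVec_mem (δ := y' - y)
    (fun a b => aeval_sub_aeval_mem_s7 (sumElim_sub_sumElim_mem x hyy') _) hyy' hf
    (fun j => aeval_sumElim_taylor_remainder_mem_sq x hyy' (f j)) hdet i)

/-- **The adjugate congruence is independent of the choice of lift.**
Let `R` be a commutative `k`-algebra, `r ≥ 2`, `q ∈ R`, `x ∈ Rⁿ`, and `y, y' ∈ Rˡ` with
`y'_j − y_j ∈ (q^(r-1))` for every `j`.  Assume every component of `f(x,y)` lies in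
`(q^(r-1))` and `Q(x,y) ∈ (q)`.  Then every component of
`Ĉ(x,y')·f(x,y') − Ĉ(x,y)·f(x,y)` lies in `(q^r)`. -/
theorem adjugate_mulVec_f_congr {k : Type*} [Field k] {n l : ℕ} (hn : 1 ≤ n) (hl : 1 ≤ l)
    (f : Fin l → MvPolynomial (Fin n ⊕ Fin l) k)
    {R : Type*} [CommRing R] [Algebra k R] (r : ℕ) (hr : 2 ≤ r)
    (q : R) (x : Fin n → R) (y y' : Fin l → R)
    (hyy' : ∀ j, y' j - y j ∈ Ideal.span {q ^ (r - 1)})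
    (hf : ∀ i, aeval (Sum.elim x y) (f i) ∈ Ideal.span {q ^ (r - 1)})
    (hQ : aeval (Sum.elim x y) (jacQ f) ∈ Ideal.span {q}) :
    ∀ i,
      (Matrix.of fun i' j' => aeval (Sum.elim x y') (jacC f i' j')).adjugate.mulVec
          (fun i' => aeval (Sum.elim x y') (f i')) i -
        (Matrix.of fun i' j' => aeval (Sum.elim x y) (jacC f i' j')).adjugate.mulVec
          (fun i' => aeval (Sum.elim x y) (f i')) i ∈ Ideal.span {q ^ r} :=
  adjugate_mulVec_f_congr_general f r hr q x y y' hyy' hf hQ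

end
end

section
/- (Solvability of C·z = c in terms of the adjugate.) Let R be a commutative ring, l ≥ 1, q ∈ R a nonzerodivisor, w ∈ R a unit, and C an l×l matrix over R with det C = q·w. Let r ≥ 1 be an integer and c ∈ Rˡ. Then: (a) there is at most one z ∈ Rˡ with C·z = c; (b) there exists z ∈ Rˡ with C·z = c and every component of z in the ideal (q^{r-1}) if and only if every component of adj(C)·c lies in the ideal (q^{r}), where adj(C) is the adjugate matrix of C. -/
/-- **Solvability of `C·z = c` in terms of the adjugate.**
Let `R` be a commutative ring, `l ≥ 1`, `q ∈ R` a nonzerodivisor, `w ∈ R` a unit, and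
`C` an `l×l` matrix over `R` with `det C = q·w`.  Let `r ≥ 1` and `c ∈ Rˡ`.  Then:
(a) there is at most one `z ∈ Rˡ` with `C·z = c`;
(b) there exists `z ∈ Rˡ` with `C·z = c` and every component of `z` in the ideal
`(q^(r-1))` if and only if every component of `adj(C)·c` lies in the ideal `(q^r)`. -/
theorem mulVec_eq_solvable_iff_adjugate {R : Type*} [CommRing R] {l : ℕ} (hl : 1 ≤ l)
    (q w : R) (hq : q ∈ nonZeroDivisors R) (hw : IsUnit w)
    (C : Matrix (Fin l) (Fin l) R) (hdet : C.det = q * w)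
    (r : ℕ) (hr : 1 ≤ r) (c : Fin l → R) :
    (∀ z z' : Fin l → R, C.mulVec z = c → C.mulVec z' = c → z = z') ∧
    ((∃ z : Fin l → R, C.mulVec z = c ∧ ∀ i, z i ∈ Ideal.span {q ^ (r - 1)}) ↔
      (∀ i, C.adjugate.mulVec c i ∈ Ideal.span {q ^ r})) := by
  obtain ⟨u, hu⟩ := hw
  have hqr : q ^ r = q * q ^ (r - 1) := by
    conv_lhs => rw [← Nat.sub_add_cancel hr, pow_succ, mul_comm]
  have key : ∀ z : Fin l → R, C.adjugate.mulVec (C.mulVec z) = fun i => q * (w * z i) := by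
    intro z
    rw [Matrix.mulVec_mulVec, Matrix.adjugate_mul, hdet]
    funext i
    rw [Matrix.smul_mulVec, Matrix.one_mulVec]
    simp [mul_assoc]
  constructor
  · intro z z' hz hz'
    funext i
    have h1 : q * (w * z i) = q * (w * z' i) := by
      have e1 := congrFun (key z) i; rw [hz] at e1
      have e2 := congrFun (key z') i; rw [hz'] at e2
      rw [← e1, ← e2]
    have h2 : w * z i = w * z' i := (mul_cancel_left_mem_nonZeroDivisors hq).mp h1
    have : (↑u⁻¹ : R) * (w * z i) = ↑u⁻¹ * (w * z' i) := by rw [h2]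
    rwa [← mul_assoc, ← mul_assoc, ← hu, Units.inv_mul, one_mul, one_mul] at this
  · constructor
    · rintro ⟨z, hz, hzi⟩ i
      have h := congrFun (key z) i
      rw [hz] at h
      rw [h, Ideal.mem_span_singleton]
      obtain ⟨t, ht⟩ := Ideal.mem_span_singleton.mp (hzi i)
      rw [ht, hqr]
      ring_nf
      exact ⟨w * t, by ring⟩
    · intro h
      choose t ht using fun i => Ideal.mem_span_singleton.mp (h i)
      refine ⟨fun i => (↑u⁻¹ : R) * (q ^ (r - 1) * t i), ?_, fun i => ?_⟩
      · funext i
        -- C.mulVec (adjC.mulVec c) = (q*w) • c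
        have hcc : C.mulVec (C.adjugate.mulVec c) = fun i => q * (w * c i) := by
          rw [Matrix.mulVec_mulVec, Matrix.mul_adjugate, hdet]
          funext i
          rw [Matrix.smul_mulVec, Matrix.one_mulVec]
          simp [mul_assoc]
        have hadj : C.adjugate.mulVec c = fun i => q * (q ^ (r - 1) * t i) := by
          funext j
          rw [ht j, hqr]; ring
        rw [hadj] at hcc
        -- hcc : C.mulVec (fun i => q * (q^(r-1) * t i)) = fun i => q * (w * c i)
        have h1 : C.mulVec (fun j => q * (q ^ (r - 1) * t j)) i
            = q * C.mulVec (fun j => q ^ (r - 1) * t j) i := by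
          simp [Matrix.mulVec, dotProduct, Finset.mul_sum, mul_left_comm]
        have h2 : q * C.mulVec (fun j => q ^ (r - 1) * t j) i = q * (w * c i) := by
          rw [← h1, hcc]
        have h3 : C.mulVec (fun j => q ^ (r - 1) * t j) i = w * c i :=
          (mul_cancel_left_mem_nonZeroDivisors hq).mp h2
        have h4 : C.mulVec (fun j => (↑u⁻¹ : R) * (q ^ (r - 1) * t j)) i
            = (↑u⁻¹ : R) * C.mulVec (fun j => q ^ (r - 1) * t j) i := by
          simp [Matrix.mulVec, dotProduct, Finset.mul_sum, mul_left_comm]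
        rw [h4, h3, ← mul_assoc, ← hu, Units.inv_mul, one_mul]
      · rw [Ideal.mem_span_singleton]
        exact ⟨↑u⁻¹ * t i, by ring⟩
end

section
/- (The polynomial u is well defined: divisibility of the Taylor remainder.) Fix an integer r ≥ 2. In the polynomial ring k[x₁,…,xₙ,y₁,…,y_l,ξ₁,…,ξₙ,η₁,…,η_l], for each 1 ≤ i ≤ l the element f_i(x + Q(x,y)^{r}·ξ, y + Q(x,y)^{r-1}·η) − f_i(x,y) − Q(x,y)^{r-1}·(C(x,y)·η)_i is divisible by Q(x,y)^{r}. Here f_i(x + Q^{r}ξ, y + Q^{r-1}η) denotes the substitution of x_j + Q(x,y)^{r}ξ_j for x_j and y_j + Q(x,y)^{r-1}η_j for y_j in f_i. -/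
open MvPolynomial Matrix

noncomputable section

lemma taylor_first_order {k : Type*} [CommRing k] {σ : Type*} [Fintype σ] [DecidableEq σ]
    (d : σ → MvPolynomial (σ ⊕ σ) k) (c : MvPolynomial (σ ⊕ σ) k) (hd : ∀ w, c ∣ d w)
    (p : MvPolynomial σ k) :
    c ^ 2 ∣ aeval (fun w => X (Sum.inl w) + d w) p - rename Sum.inl p -
      ∑ w, d w * rename Sum.inl (pderiv w p) := by
  induction p using MvPolynomial.induction_on with
  | C a => simp
  | add p q hp hq =>
      have h := dvd_add hp hq
      convert h using 1
      simp only [map_add, Finset.sum_add_distrib, mul_add]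
      ring
  | mul_X p w hp =>
      have hS : c ∣ ∑ w', d w' * rename Sum.inl (pderiv w' p) :=
        Finset.dvd_sum fun w' _ => (hd w').mul_right _
      have key : aeval (fun w => X (Sum.inl w) + d w) (p * X w) - rename Sum.inl (p * X w) -
          ∑ w', d w' * rename Sum.inl (pderiv w' (p * X w)) =
          (aeval (fun w => X (Sum.inl w) + d w) p - rename Sum.inl p -
            ∑ w', d w' * rename Sum.inl (pderiv w' p)) * X (Sum.inl w) +
          d w * (aeval (fun w => X (Sum.inl w) + d w) p - rename Sum.inl p -
            ∑ w', d w' * rename Sum.inl (pderiv w' p)) +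
          d w * ∑ w', d w' * rename Sum.inl (pderiv w' p) := by
        have hsum : ∀ w' : σ, d w' * rename Sum.inl (pderiv w' (p * X w)) =
            d w' * rename Sum.inl (pderiv w' p) * X (Sum.inl w) +
            d w' * rename Sum.inl p * (if w' = w then 1 else 0) := by
          intro w'
          rw [pderiv_mul, pderiv_X]
          by_cases h : w' = w <;> simp [h, Pi.single_apply, mul_add, mul_comm, mul_assoc, mul_left_comm]
        simp only [_root_.map_mul, aeval_X, rename_X, hsum, Finset.sum_add_distrib,
          mul_ite, mul_one, mul_zero, Finset.sum_ite_eq', Finset.mem_univ, if_true,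
          ← Finset.sum_mul]
        ring
      rw [key]
      refine dvd_add (dvd_add (hp.mul_right _) (hp.mul_left _)) ?_
      rw [pow_two]
      exact mul_dvd_mul (hd w) hS


/-- In the polynomial ring `k[x,y,ξ,η]` (variables indexed by
`(Fin n ⊕ Fin l) ⊕ (Fin n ⊕ Fin l)`, the first summand being the `(x,y)`-variables and the
second the `(ξ,η)`-variables), the substitution sending `x_i ↦ x_i + Q(x,y)^r·ξ_i` and
`y_j ↦ y_j + Q(x,y)^(r-1)·η_j`. -/
def newtonSubst {k : Type*} [Field k] {n l : ℕ} (f : Fin l → MvPolynomial (Fin n ⊕ Fin l) k)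
    (r : ℕ) : Fin n ⊕ Fin l → MvPolynomial ((Fin n ⊕ Fin l) ⊕ (Fin n ⊕ Fin l)) k :=
  fun w => Sum.elim
    (fun i => X (Sum.inl (Sum.inl i)) +
      (rename Sum.inl (jacQ f)) ^ r * X (Sum.inr (Sum.inl i)))
    (fun j => X (Sum.inl (Sum.inr j)) +
      (rename Sum.inl (jacQ f)) ^ (r - 1) * X (Sum.inr (Sum.inr j))) w

/-- **The polynomial `u` is well defined: divisibility of the Taylor remainder.**
Fix `r ≥ 2`.  In `k[x,y,ξ,η]`, for each `1 ≤ i ≤ l` the element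
`f_i(x + Q^r ξ, y + Q^(r-1) η) − f_i(x,y) − Q^(r-1)·(C(x,y)·η)_i` is divisible by
`Q(x,y)^r`. -/
theorem f_subst_taylor_remainder_dvd {k : Type*} [Field k] {n l : ℕ} (hn : 1 ≤ n) (hl : 1 ≤ l)
    (f : Fin l → MvPolynomial (Fin n ⊕ Fin l) k) (r : ℕ) (hr : 2 ≤ r) :
    ∀ i : Fin l,
      (rename Sum.inl (jacQ f)) ^ r ∣
        aeval (newtonSubst f r) (f i) - rename Sum.inl (f i) -
          (rename Sum.inl (jacQ f)) ^ (r - 1) *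
            ∑ j : Fin l, rename Sum.inl (jacC f i j) * X (Sum.inr (Sum.inr j)) := by
  intro i
  set Q' := (rename (Sum.inl : (Fin n ⊕ Fin l) → (Fin n ⊕ Fin l) ⊕ (Fin n ⊕ Fin l))
    (jacQ f)) with hQ'
  set d : Fin n ⊕ Fin l → MvPolynomial ((Fin n ⊕ Fin l) ⊕ (Fin n ⊕ Fin l)) k :=
    Sum.elim (fun i' => Q' ^ r * X (Sum.inr (Sum.inl i')))
      (fun j => Q' ^ (r - 1) * X (Sum.inr (Sum.inr j))) with hd
  have hdd : ∀ w, Q' ^ (r - 1) ∣ d w := by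
    rintro (i' | j)
    · exact ((pow_dvd_pow Q' (Nat.sub_le r 1)).mul_right _)
    · exact Dvd.intro _ rfl
  have hsubst : newtonSubst f r = fun w => X (Sum.inl w) + d w := by
    funext w; cases w <;> rfl
  have htay := taylor_first_order d (Q' ^ (r - 1)) hdd (f i)
  rw [← hsubst] at htay
  have hpow : Q' ^ r ∣ (Q' ^ (r - 1)) ^ 2 := by
    rw [← pow_mul]
    exact pow_dvd_pow Q' (by omega)
  have h1 : Q' ^ r ∣ aeval (newtonSubst f r) (f i) - rename Sum.inl (f i) -
      ∑ w, d w * rename Sum.inl (pderiv w (f i)) := hpow.trans htay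
  have hsplit : (∑ w, d w * rename Sum.inl (pderiv w (f i))) =
      (∑ i' : Fin n, Q' ^ r * (X (Sum.inr (Sum.inl i')) *
        rename Sum.inl (pderiv (Sum.inl i') (f i)))) +
      Q' ^ (r - 1) * ∑ j : Fin l, rename Sum.inl (jacC f i j) * X (Sum.inr (Sum.inr j)) := by
    rw [Fintype.sum_sum_type, Finset.mul_sum]
    congr 1
    · exact Finset.sum_congr rfl fun i' _ => by simp [hd]; ring
    · exact Finset.sum_congr rfl fun j _ => by simp [hd, jacC]; ring
  have h2 : Q' ^ r ∣ ∑ i' : Fin n, Q' ^ r * (X (Sum.inr (Sum.inl i')) *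
      rename Sum.inl (pderiv (Sum.inl i') (f i))) :=
    Finset.dvd_sum fun i' _ => Dvd.intro _ rfl
  have := dvd_add h1 h2
  convert this using 1
  rw [hsplit]
  ring

end
end

section
/- (Defining equation of the Newton groupoid, Lemma on the embedding, part (i).) Fix an integer r ≥ 2. Let S be a commutative k-algebra and (x,y,ξ,η) ∈ Sⁿ × Sˡ × Sⁿ × Sˡ such that f(x,y) = 0 and Q(x,y) is a nonzerodivisor in S. Set x̃ := x + Q(x,y)^{r}·ξ and ỹ := y + Q(x,y)^{r-1}·η. Then f(x̃,ỹ) = 0 if and only if η + Ĉ(x,y)·u(x,y,ξ,η) = 0 in Sˡ. -/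
open MvPolynomial Matrix

noncomputable section

/-- The property defining the polynomial (vector) `u(x,y,ξ,η)`:
`Q^r·u = f(x+Q^r ξ, y+Q^(r-1) η) − f(x,y) − Q^(r-1)·C(x,y)·η` in `k[x,y,ξ,η]`. -/
def IsNewtonU {k : Type*} [Field k] {n l : ℕ} (f : Fin l → MvPolynomial (Fin n ⊕ Fin l) k)
    (r : ℕ) (uP : Fin l → MvPolynomial ((Fin n ⊕ Fin l) ⊕ (Fin n ⊕ Fin l)) k) : Prop :=
  ∀ i, (rename Sum.inl (jacQ f)) ^ r * uP i =
    aeval (newtonSubst f r) (f i) - rename Sum.inl (f i) -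
      (rename Sum.inl (jacQ f)) ^ (r - 1) *
        ∑ j : Fin l, rename Sum.inl (jacC f i j) * X (Sum.inr (Sum.inr j))

/-- The property defining the polynomial `v(x,y,ξ,η)`:
`Q·v = Q(x+Q^r ξ, y+Q^(r-1) η)` in `k[x,y,ξ,η]`. -/
def IsNewtonV {k : Type*} [Field k] {n l : ℕ} (f : Fin l → MvPolynomial (Fin n ⊕ Fin l) k)
    (r : ℕ) (vP : MvPolynomial ((Fin n ⊕ Fin l) ⊕ (Fin n ⊕ Fin l)) k) : Prop :=
  (rename Sum.inl (jacQ f)) * vP = aeval (newtonSubst f r) (jacQ f)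

/-!
Pulling the identity `Q^r·u = f(x̃,ỹ) − f(x,y) − Q^(r-1)·C·η` back along the point gives, since
`f(x,y) = 0` and `r ≥ 1`, `f(x̃,ỹ) = Q^(r-1)·(C·η + Q·u)`. As `Q` is a nonzerodivisor, the factor
`Q^(r-1)` cancels, and because `Q = det C`, the vector `C·η + Q·u = C·(η + Ĉ·u)` vanishes exactly
when `η + Ĉ·u` does.
-/

open nonZeroDivisors

theorem Matrix.mulVec_add_det_smul_eq_zero_iff {ι R : Type*} [Fintype ι] [DecidableEq ι]
    [CommRing R] {C : Matrix ι ι R} (hC : C.det ∈ R⁰) (η u : ι → R) :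
    C *ᵥ η + C.det • u = 0 ↔ η + C.adjugate *ᵥ u = 0 := by
  conv_rhs => rw [← (mulVec_injective_of_det_mem_nonZeroDivisors hC).eq_iff, mulVec_add,
    mulVec_mulVec, mul_adjugate, smul_mulVec, one_mulVec, mulVec_zero]

theorem MvPolynomial.aeval_sumElim_rename_inl {R A σ τ : Type*} [CommSemiring R]
    [CommSemiring A] [Algebra R A] (a : σ → A) (b : τ → A) (p : MvPolynomial σ R) :
    aeval (Sum.elim a b) (rename Sum.inl p) = aeval a p := by
  rw [aeval_rename, Sum.elim_comp_inl]

section NewtonSubst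

variable {k : Type*} [Field k] {n l : ℕ} (f : Fin l → MvPolynomial (Fin n ⊕ Fin l) k) (r : ℕ)
  {S : Type*} [CommRing S] [Algebra k S] (x : Fin n → S) (y : Fin l → S) (ξ : Fin n → S)
  (η : Fin l → S)

theorem aeval_aeval_newtonSubst (p : MvPolynomial (Fin n ⊕ Fin l) k) :
    aeval (Sum.elim (Sum.elim x y) (Sum.elim ξ η)) (aeval (newtonSubst f r) p) =
      aeval (Sum.elim
        (fun i => x i + aeval (Sum.elim x y) (jacQ f) ^ r * ξ i)
        (fun j => y j + aeval (Sum.elim x y) (jacQ f) ^ (r - 1) * η j)) p := by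
  rw [comp_aeval_apply]
  refine congrArg (fun g => aeval g p) (funext fun w => ?_)
  rcases w with i | j <;>
    simp [newtonSubst, aeval_sumElim_rename_inl]

theorem aeval_newtonSubst_eq_of_isNewtonU {uP : Fin l → MvPolynomial _ k}
    (hu : IsNewtonU f r uP) (hr : 1 ≤ r) (hf : ∀ i, aeval (Sum.elim x y) (f i) = 0) (i : Fin l) :
    aeval (Sum.elim
        (fun i' => x i' + aeval (Sum.elim x y) (jacQ f) ^ r * ξ i')
        (fun j' => y j' + aeval (Sum.elim x y) (jacQ f) ^ (r - 1) * η j')) (f i) =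
      aeval (Sum.elim x y) (jacQ f) ^ (r - 1) *
        ((Matrix.of fun i' j' => aeval (Sum.elim x y) (jacC f i' j')) *ᵥ η +
          aeval (Sum.elim x y) (jacQ f) •
            fun i' => aeval (Sum.elim (Sum.elim x y) (Sum.elim ξ η)) (uP i')) i := by
  have h := congrArg (aeval (Sum.elim (Sum.elim x y) (Sum.elim ξ η))) (hu i)
  simp only [map_mul, map_pow, map_sub, map_sum, aeval_sumElim_rename_inl,
    aeval_aeval_newtonSubst, aeval_X, Sum.elim_inr, hf i, sub_zero] at h
  rw [eq_sub_iff_add_eq] at h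
  rw [← h, Pi.add_apply, Pi.smul_apply, Matrix.mulVec, dotProduct, smul_eq_mul,
    ← Nat.sub_add_cancel hr]
  simp only [Matrix.of_apply, Nat.add_sub_cancel]
  ring

end NewtonSubst

theorem newton_groupoid_defining_equation_general {k : Type*} [Field k] {n l : ℕ}
    (f : Fin l → MvPolynomial (Fin n ⊕ Fin l) k) (r : ℕ) (hr : 2 ≤ r)
    (uP : Fin l → MvPolynomial ((Fin n ⊕ Fin l) ⊕ (Fin n ⊕ Fin l)) k)
    (hu : IsNewtonU f r uP)
    (S : Type*) [CommRing S] [Algebra k S]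
    (x : Fin n → S) (y : Fin l → S) (ξ : Fin n → S) (η : Fin l → S)
    (hf : ∀ i, aeval (Sum.elim x y) (f i) = 0)
    (hQ : aeval (Sum.elim x y) (jacQ f) ∈ nonZeroDivisors S) :
    (∀ i, aeval (Sum.elim
        (fun i' => x i' + (aeval (Sum.elim x y) (jacQ f)) ^ r * ξ i')
        (fun j' => y j' + (aeval (Sum.elim x y) (jacQ f)) ^ (r - 1) * η j')) (f i) = 0) ↔
    (∀ i, η i +
        (Matrix.of fun i' j' => aeval (Sum.elim x y) (jacC f i' j')).adjugate.mulVec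
          (fun i' => aeval (Sum.elim (Sum.elim x y) (Sum.elim ξ η)) (uP i')) i = 0) := by
  have hdet : (Matrix.of fun i j => aeval (Sum.elim x y) (jacC f i j)).det =
      aeval (Sum.elim x y) (jacQ f) :=
    (AlgHom.map_det _ (jacC f)).symm
  simp only [aeval_newtonSubst_eq_of_isNewtonU f r x y ξ η hu (by omega) hf,
    mul_left_mem_nonZeroDivisors_eq_zero_iff (pow_mem hQ _)]
  rw [← hdet]
  exact (funext_iff.symm.trans
    (Matrix.mulVec_add_det_smul_eq_zero_iff (hdet ▸ hQ) _ _)).trans funext_iff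

/-- **Defining equation of the Newton groupoid (embedding lemma, part (i)).**
Fix `r ≥ 2`.  Let `S` be a commutative `k`-algebra and `(x,y,ξ,η) ∈ Sⁿ × Sˡ × Sⁿ × Sˡ`
with `f(x,y) = 0` and `Q(x,y)` a nonzerodivisor in `S`.  Put `x̃ := x + Q(x,y)^r·ξ`,
`ỹ := y + Q(x,y)^(r-1)·η`.  Then `f(x̃,ỹ) = 0` iff `η + Ĉ(x,y)·u(x,y,ξ,η) = 0` in `Sˡ`. -/
theorem newton_groupoid_defining_equation {k : Type*} [Field k] {n l : ℕ}
    (hn : 1 ≤ n) (hl : 1 ≤ l)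
    (f : Fin l → MvPolynomial (Fin n ⊕ Fin l) k) (r : ℕ) (hr : 2 ≤ r)
    (uP : Fin l → MvPolynomial ((Fin n ⊕ Fin l) ⊕ (Fin n ⊕ Fin l)) k)
    (hu : IsNewtonU f r uP)
    (S : Type*) [CommRing S] [Algebra k S]
    (x : Fin n → S) (y : Fin l → S) (ξ : Fin n → S) (η : Fin l → S)
    (hf : ∀ i, aeval (Sum.elim x y) (f i) = 0)
    (hQ : aeval (Sum.elim x y) (jacQ f) ∈ nonZeroDivisors S) :
    (∀ i, aeval (Sum.elim
        (fun i' => x i' + (aeval (Sum.elim x y) (jacQ f)) ^ r * ξ i')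
        (fun j' => y j' + (aeval (Sum.elim x y) (jacQ f)) ^ (r - 1) * η j')) (f i) = 0) ↔
    (∀ i, η i +
        (Matrix.of fun i' j' => aeval (Sum.elim x y) (jacC f i' j')).adjugate.mulVec
          (fun i' => aeval (Sum.elim (Sum.elim x y) (Sum.elim ξ η)) (uP i')) i = 0) :=
  newton_groupoid_defining_equation_general f r hr uP hu S x y ξ η hf hQ

end
end

section
/- (Closure and multiplicativity for the composition law of the Newton groupoid.) Fix an integer r ≥ 2. Let S be a commutative k-algebra, and let (x,y) ∈ Sⁿ × Sˡ with f(x,y) = 0 and Q(x,y) a nonzerodivisor in S. Let (ξ,η) ∈ Sⁿ × Sˡ satisfy η + Ĉ(x,y)·u(x,y,ξ,η) = 0 and v(x,y,ξ,η) ∈ S^×. Set x̃ := x + Q(x,y)^{r}ξ, ỹ := y + Q(x,y)^{r-1}η, and let (ξ̃,η̃) ∈ Sⁿ × Sˡ satisfy η̃ + Ĉ(x̃,ỹ)·u(x̃,ỹ,ξ̃,η̃) = 0 and v(x̃,ỹ,ξ̃,η̃) ∈ S^×. Define ξ' := ξ + v(x,y,ξ,η)^{r}·ξ̃ and η' :=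 η + v(x,y,ξ,η)^{r-1}·η̃. Then: (a) f(x̃,ỹ) = 0 and Q(x̃,ỹ) = Q(x,y)·v(x,y,ξ,η) is a nonzerodivisor; (b) x̃ + Q(x̃,ỹ)^{r}ξ̃ = x + Q(x,y)^{r}ξ' and ỹ + Q(x̃,ỹ)^{r-1}η̃ = y + Q(x,y)^{r-1}η'; (c) η' + Ĉ(x,y)·u(x,y,ξ',η') = 0 and v(x,y,ξ',η') = v(x,y,ξ,η)·v(x̃,ỹ,ξ̃,η̃), which is a unit of S. -/
open MvPolynomial Matrix

noncomputable section

variable {k : Type*} [Field k] {n l : ℕ}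

/-- Evaluation of `Q` at a point `(x,y)` of a commutative `k`-algebra `S`. -/
def QAt (f : Fin l → MvPolynomial (Fin n ⊕ Fin l) k) {S : Type*} [CommRing S] [Algebra k S]
    (x : Fin n → S) (y : Fin l → S) : S :=
  aeval (Sum.elim x y) (jacQ f)

/-- Evaluation of `f` at a point `(x,y)`. -/
def fAt (f : Fin l → MvPolynomial (Fin n ⊕ Fin l) k) {S : Type*} [CommRing S] [Algebra k S]
    (x : Fin n → S) (y : Fin l → S) : Fin l → S :=
  fun i => aeval (Sum.elim x y) (f i)

/-- Evaluation of the Jacobian matrix `C` at a point `(x,y)`. -/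
def CAt (f : Fin l → MvPolynomial (Fin n ⊕ Fin l) k) {S : Type*} [CommRing S] [Algebra k S]
    (x : Fin n → S) (y : Fin l → S) : Matrix (Fin l) (Fin l) S :=
  Matrix.of fun i j => aeval (Sum.elim x y) (jacC f i j)

/-- Evaluation of a polynomial in `k[x,y,ξ,η]` at a point `(x,y,ξ,η)`. -/
def evalXYΞΗ {S : Type*} [CommRing S] [Algebra k S]
    (x : Fin n → S) (y : Fin l → S) (ξ : Fin n → S) (η : Fin l → S)
    (p : MvPolynomial ((Fin n ⊕ Fin l) ⊕ (Fin n ⊕ Fin l)) k) : S :=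
  aeval (Sum.elim (Sum.elim x y) (Sum.elim ξ η)) p


section NewtonHelpers

variable (f : Fin l → MvPolynomial (Fin n ⊕ Fin l) k)
variable {S : Type*} [CommRing S] [Algebra k S]

lemma aevalE_rename (x : Fin n → S) (y : Fin l → S) (ξ : Fin n → S) (η : Fin l → S)
    (p : MvPolynomial (Fin n ⊕ Fin l) k) :
    aeval (Sum.elim (Sum.elim x y) (Sum.elim ξ η)) (rename Sum.inl p) = aeval (Sum.elim x y) p := by
  simp [aeval_rename, Sum.elim_comp_inl]

lemma aevalE_subst (r : ℕ) (x : Fin n → S) (y : Fin l → S) (ξ : Fin n → S) (η : Fin l → S)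
    (p : MvPolynomial (Fin n ⊕ Fin l) k) :
    aeval (Sum.elim (Sum.elim x y) (Sum.elim ξ η)) (aeval (newtonSubst f r) p) =
      aeval (Sum.elim (fun i => x i + QAt f x y ^ r * ξ i)
        (fun j => y j + QAt f x y ^ (r - 1) * η j)) p := by
  have hw : (fun w => aeval (Sum.elim (Sum.elim x y) (Sum.elim ξ η)) (newtonSubst f r w)) =
      Sum.elim (fun i => x i + QAt f x y ^ r * ξ i) (fun j => y j + QAt f x y ^ (r - 1) * η j) := by
    funext w
    cases w with
    | inl i => simp [newtonSubst, aeval_rename, QAt, Sum.elim_comp_inl]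
    | inr j => simp [newtonSubst, aeval_rename, QAt, Sum.elim_comp_inl]
  rw [← AlgHom.comp_apply, comp_aeval, hw]

lemma det_CAt (x : Fin n → S) (y : Fin l → S) : (CAt f x y).det = QAt f x y := by
  have h : CAt f x y =
      (aeval (Sum.elim x y) : MvPolynomial (Fin n ⊕ Fin l) k →ₐ[k] S).mapMatrix (jacC f) := rfl
  rw [h, ← AlgHom.map_det]; rfl

lemma newton_mulVec_eta (x : Fin n → S) (y : Fin l → S) (u : Fin l → S) (η : Fin l → S)
    (hη : ∀ i, η i + (CAt f x y).adjugate.mulVec u i = 0) :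
    (CAt f x y).mulVec η = -(QAt f x y • u) := by
  have hηe : η = -((CAt f x y).adjugate.mulVec u) := funext fun i1 => eq_neg_of_add_eq_zero_left (hη i1)
  rw [hηe, Matrix.mulVec_neg, Matrix.mulVec_mulVec, Matrix.mul_adjugate, det_CAt,
    Matrix.smul_mulVec, Matrix.one_mulVec]

/-- Evaluated version of `IsNewtonU`. -/
lemma newton_hu_eval (r : ℕ)
    (uP : Fin l → MvPolynomial ((Fin n ⊕ Fin l) ⊕ (Fin n ⊕ Fin l)) k)
    (hu : IsNewtonU f r uP)
    (x : Fin n → S) (y : Fin l → S) (ξ : Fin n → S) (η : Fin l → S) (i : Fin l) :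
    QAt f x y ^ r * evalXYΞΗ x y ξ η (uP i) =
      fAt f (fun i => x i + QAt f x y ^ r * ξ i) (fun j => y j + QAt f x y ^ (r - 1) * η j) i
        - fAt f x y i - QAt f x y ^ (r - 1) * ∑ j, CAt f x y i j * η j := by
  have h1 := congrArg (fun p => aeval (Sum.elim (Sum.elim x y) (Sum.elim ξ η)) p) (hu i)
  simp only [_root_.map_mul, _root_.map_pow, _root_.map_sub, map_sum, aevalE_rename, aevalE_subst, aeval_X,
    Sum.elim_inr, Sum.elim_inl] at h1
  simpa [QAt, fAt, CAt, evalXYΞΗ] using h1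

/-- Evaluated version of `IsNewtonV`. -/
lemma newton_hv_eval (r : ℕ)
    (vP : MvPolynomial ((Fin n ⊕ Fin l) ⊕ (Fin n ⊕ Fin l)) k)
    (hv : IsNewtonV f r vP)
    (x : Fin n → S) (y : Fin l → S) (ξ : Fin n → S) (η : Fin l → S) :
    QAt f x y * evalXYΞΗ x y ξ η vP =
      QAt f (fun i => x i + QAt f x y ^ r * ξ i) (fun j => y j + QAt f x y ^ (r - 1) * η j) := by
  have h1 := congrArg (fun p => aeval (Sum.elim (Sum.elim x y) (Sum.elim ξ η)) p) hv
  simp only [_root_.map_mul, aevalE_rename, aevalE_subst] at h1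
  simpa [QAt, evalXYΞΗ] using h1

lemma newton_step (r : ℕ) (hr : 1 ≤ r)
    (uP : Fin l → MvPolynomial ((Fin n ⊕ Fin l) ⊕ (Fin n ⊕ Fin l)) k)
    (vP : MvPolynomial ((Fin n ⊕ Fin l) ⊕ (Fin n ⊕ Fin l)) k)
    (hu : IsNewtonU f r uP) (hv : IsNewtonV f r vP)
    (x : Fin n → S) (y : Fin l → S) (hf : ∀ i, fAt f x y i = 0)
    (ξ : Fin n → S) (η : Fin l → S)
    (hη : ∀ i, η i + (CAt f x y).adjugate.mulVec (fun i' => evalXYΞΗ x y ξ η (uP i')) i = 0) :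
    (∀ i, fAt f (fun i => x i + QAt f x y ^ r * ξ i)
        (fun j => y j + QAt f x y ^ (r - 1) * η j) i = 0) ∧
      QAt f (fun i => x i + QAt f x y ^ r * ξ i) (fun j => y j + QAt f x y ^ (r - 1) * η j)
        = QAt f x y * evalXYΞΗ x y ξ η vP := by
  set Qv := QAt f x y with hQv
  set u : Fin l → S := fun i' => evalXYΞΗ x y ξ η (uP i') with hudef
  have hmv : (CAt f x y).mulVec η = -(Qv • u) := newton_mulVec_eta f x y u η hη
  have hpow : Qv ^ (r - 1) * Qv = Qv ^ r := by
    rw [← pow_succ, Nat.sub_add_cancel hr]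
  refine ⟨fun i => ?_, (newton_hv_eval f r vP hv x y ξ η).symm⟩
  have h1 := newton_hu_eval f r uP hu x y ξ η i
  have hsum : ∑ j, CAt f x y i j * η j = -(Qv * u i) := by
    have := congrFun hmv i
    simpa [Matrix.mulVec, dotProduct] using this
  rw [hf i, hsum] at h1
  linear_combination -h1 - u i * hpow

end NewtonHelpers

/-- **Closure and multiplicativity for the composition law of the Newton groupoid.**
Fix `r ≥ 2`.  With `f(x,y) = 0`, `Q(x,y)` a nonzerodivisor,
`η + Ĉ(x,y)·u(x,y,ξ,η) = 0`, `v(x,y,ξ,η) ∈ S^×`, `x̃ = x + Q^r ξ`, `ỹ = y + Q^(r-1) η`,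
`η̃ + Ĉ(x̃,ỹ)·u(x̃,ỹ,ξ̃,η̃) = 0`, `v(x̃,ỹ,ξ̃,η̃) ∈ S^×`,
`ξ' = ξ + v(x,y,ξ,η)^r ξ̃` and `η' = η + v(x,y,ξ,η)^(r-1) η̃`, we have:
(a) `f(x̃,ỹ) = 0`, `Q(x̃,ỹ) = Q(x,y)·v(x,y,ξ,η)` is a nonzerodivisor;
(b) `x̃ + Q(x̃,ỹ)^r ξ̃ = x + Q(x,y)^r ξ'` and `ỹ + Q(x̃,ỹ)^(r-1) η̃ = y + Q(x,y)^(r-1) η'`;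
(c) `η' + Ĉ(x,y)·u(x,y,ξ',η') = 0` and
`v(x,y,ξ',η') = v(x,y,ξ,η)·v(x̃,ỹ,ξ̃,η̃)`, a unit of `S`. -/
theorem newton_groupoid_composition (hn : 1 ≤ n) (hl : 1 ≤ l)
    (f : Fin l → MvPolynomial (Fin n ⊕ Fin l) k) (r : ℕ) (hr : 2 ≤ r)
    (uP : Fin l → MvPolynomial ((Fin n ⊕ Fin l) ⊕ (Fin n ⊕ Fin l)) k)
    (vP : MvPolynomial ((Fin n ⊕ Fin l) ⊕ (Fin n ⊕ Fin l)) k)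
    (hu : IsNewtonU f r uP) (hv : IsNewtonV f r vP)
    (S : Type*) [CommRing S] [Algebra k S]
    (x : Fin n → S) (y : Fin l → S)
    (hf : ∀ i, fAt f x y i = 0) (hQ : QAt f x y ∈ nonZeroDivisors S)
    (ξ : Fin n → S) (η : Fin l → S)
    (hη : ∀ i, η i + (CAt f x y).adjugate.mulVec (fun i' => evalXYΞΗ x y ξ η (uP i')) i = 0)
    (hvu : IsUnit (evalXYΞΗ x y ξ η vP))
    (xt : Fin n → S) (hxt : xt = fun i => x i + QAt f x y ^ r * ξ i)
    (yt : Fin l → S) (hyt : yt = fun j => y j + QAt f x y ^ (r - 1) * η j)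
    (ξt : Fin n → S) (ηt : Fin l → S)
    (hηt : ∀ i, ηt i + (CAt f xt yt).adjugate.mulVec (fun i' => evalXYΞΗ xt yt ξt ηt (uP i')) i = 0)
    (hvt : IsUnit (evalXYΞΗ xt yt ξt ηt vP))
    (ξ' : Fin n → S) (hξ' : ξ' = fun i => ξ i + evalXYΞΗ x y ξ η vP ^ r * ξt i)
    (η' : Fin l → S) (hη' : η' = fun j => η j + evalXYΞΗ x y ξ η vP ^ (r - 1) * ηt j) :
    ((∀ i, fAt f xt yt i = 0) ∧
      QAt f xt yt = QAt f x y * evalXYΞΗ x y ξ η vP ∧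
      QAt f xt yt ∈ nonZeroDivisors S) ∧
    ((∀ i, xt i + QAt f xt yt ^ r * ξt i = x i + QAt f x y ^ r * ξ' i) ∧
      (∀ j, yt j + QAt f xt yt ^ (r - 1) * ηt j = y j + QAt f x y ^ (r - 1) * η' j)) ∧
    ((∀ i, η' i + (CAt f x y).adjugate.mulVec (fun i' => evalXYΞΗ x y ξ' η' (uP i')) i = 0) ∧
      evalXYΞΗ x y ξ' η' vP = evalXYΞΗ x y ξ η vP * evalXYΞΗ xt yt ξt ηt vP ∧
      IsUnit (evalXYΞΗ x y ξ' η' vP)) := by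
  have hr1 : 1 ≤ r := le_trans one_le_two hr
  -- Part (a)
  obtain ⟨hft, hQt⟩ := newton_step f r hr1 uP vP hu hv x y hf ξ η hη
  rw [← hxt, ← hyt] at hft hQt
  have hQtnzd : QAt f xt yt ∈ nonZeroDivisors S := by
    rw [hQt]; exact mul_mem hQ hvu.mem_nonZeroDivisors
  -- Part (b)
  have hbx : ∀ i, xt i + QAt f xt yt ^ r * ξt i = x i + QAt f x y ^ r * ξ' i := by
    intro i; rw [hQt, hxt, hξ']; ring
  have hby : ∀ j, yt j + QAt f xt yt ^ (r - 1) * ηt j = y j + QAt f x y ^ (r - 1) * η' j := by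
    intro j; rw [hQt, hyt, hη']; ring
  -- second application of the step, at (xt, yt, ξt, ηt)
  obtain ⟨hftt, hQtt⟩ := newton_step f r hr1 uP vP hu hv xt yt hft ξt ηt hηt
  have hxtt : (fun i => xt i + QAt f xt yt ^ r * ξt i)
      = fun i => x i + QAt f x y ^ r * ξ' i := funext hbx
  have hytt : (fun j => yt j + QAt f xt yt ^ (r - 1) * ηt j)
      = fun j => y j + QAt f x y ^ (r - 1) * η' j := funext hby
  rw [hxtt, hytt] at hftt hQtt
  -- value of v at (x, y, ξ', η')
  have hvmul : evalXYΞΗ x y ξ' η' vP = evalXYΞΗ x y ξ η vP * evalXYΞΗ xt yt ξt ηt vP := by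
    have h2 := newton_hv_eval f r vP hv x y ξ' η'
    rw [hQtt, hQt, mul_assoc] at h2
    exact (mul_cancel_left_mem_nonZeroDivisors hQ).mp h2
  have hpow : QAt f x y ^ (r - 1) * QAt f x y = QAt f x y ^ r := by
    rw [← pow_succ, Nat.sub_add_cancel hr1]
  -- the η' relation
  have hηnew : ∀ i, η' i + (CAt f x y).adjugate.mulVec
      (fun i' => evalXYΞΗ x y ξ' η' (uP i')) i = 0 := by
    set u' : Fin l → S := fun i' => evalXYΞΗ x y ξ' η' (uP i') with hu'def
    have hkey : ∀ i, QAt f x y ^ r * u' i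
        = -(QAt f x y ^ (r - 1) * ((CAt f x y).mulVec η' i)) := by
      intro i
      have h1 := newton_hu_eval f r uP hu x y ξ' η' i
      rw [hftt i, hf i] at h1
      have hsum : ∑ j, CAt f x y i j * η' j = (CAt f x y).mulVec η' i := by
        simp [Matrix.mulVec, dotProduct]
      rw [hsum] at h1
      linear_combination h1
    have hsmul : (QAt f x y ^ r) • u'
        = -((QAt f x y ^ (r - 1)) • (CAt f x y).mulVec η') := by
      funext i; simpa [smul_eq_mul] using hkey i
    intro i
    have hQr : QAt f x y ^ r ∈ nonZeroDivisors S := pow_mem hQ r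
    refine (mul_cancel_left_mem_nonZeroDivisors hQr).mp ?_
    have hadj : QAt f x y ^ r * (CAt f x y).adjugate.mulVec u' i
        = -(QAt f x y ^ r * η' i) := by
      have h3 : (CAt f x y).adjugate.mulVec ((QAt f x y ^ r) • u')
          = -((QAt f x y ^ (r - 1)) • (QAt f x y • η')) := by
        rw [hsmul, Matrix.mulVec_neg, Matrix.mulVec_smul, Matrix.mulVec_mulVec,
          Matrix.adjugate_mul, det_CAt, Matrix.smul_mulVec, Matrix.one_mulVec]
      have h4 := congrFun h3 i
      simp only [Matrix.mulVec_smul, Pi.neg_apply, Pi.smul_apply, smul_eq_mul] at h4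
      rw [h4, ← mul_assoc, hpow]
    rw [mul_zero, mul_add, hadj]
    ring
  exact ⟨⟨hft, hQt, hQtnzd⟩, ⟨hbx, hby⟩,
    hηnew, hvmul, (by rw [hvmul]; exact hvu.mul hvt)⟩

end
end

section
/- (Fiber of the Newton groupoid for r ≥ 3: additive group.) Fix integers r ≥ 3 and l ≥ 2, and a point (x₀,y₀) ∈ kⁿ × kˡ with f(x₀,y₀) = 0 and C(x₀,y₀) = 0 (the whole Jacobian matrix vanishes; in particular Q(x₀,y₀) = 0 and Ĉ(x₀,y₀) = 0). Then: (a) v(x₀,y₀,ξ,η) = 1 identically as a polynomial in ξ,η; (b) for every commutative k-algebra R, the group G(R) := {(ξ,η) ∈ Rⁿ × Rˡ : η + Ĉ(x₀,y₀)·u(x₀,y₀,ξ,η) = 0, v(x₀,y₀,ξ,η) ∈ R^×} with operation (ξ̃,η̃)∘(ξ,η) = (ξ + v(x₀,y₀,ξ,η)^{r}ξ̃, η + v(x₀,y₀,ξ,η)^{r-1}η̃) equals Rⁿ × {0}, and the operation is (ξ̃,0)∘(ξ,0) = (ξ + ξ̃, 0); hence G(R) is isomorphic as a group to the additive group Rⁿ,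 naturally in R. -/
open MvPolynomial Matrix

noncomputable section

variable {k : Type*} [Field k] {n l : ℕ}

/-- The set `G(R)` of the fiber of the Newton groupoid over the `k`-point `(x₀,y₀)`:
pairs `(ξ,η)` with `η + Ĉ(x₀,y₀)·u(x₀,y₀,ξ,η) = 0` and `v(x₀,y₀,ξ,η) ∈ R^×`. -/
def newtonFiber (f : Fin l → MvPolynomial (Fin n ⊕ Fin l) k)
    (uP : Fin l → MvPolynomial ((Fin n ⊕ Fin l) ⊕ (Fin n ⊕ Fin l)) k)
    (vP : MvPolynomial ((Fin n ⊕ Fin l) ⊕ (Fin n ⊕ Fin l)) k)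
    (x₀ : Fin n → k) (y₀ : Fin l → k)
    (R : Type*) [CommRing R] [Algebra k R] : Set ((Fin n → R) × (Fin l → R)) :=
  {p | (∀ i, p.2 i +
        (CAt f (fun i' => algebraMap k R (x₀ i'))
          (fun j' => algebraMap k R (y₀ j'))).adjugate.mulVec
          (fun i' => evalXYΞΗ (fun i'' => algebraMap k R (x₀ i''))
            (fun j'' => algebraMap k R (y₀ j'')) p.1 p.2 (uP i')) i = 0) ∧
      IsUnit (evalXYΞΗ (fun i'' => algebraMap k R (x₀ i''))
        (fun j'' => algebraMap k R (y₀ j'')) p.1 p.2 vP)}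

/-- The composition law `(ξ̃,η̃)∘(ξ,η) = (ξ + v(x₀,y₀,ξ,η)^r ξ̃, η + v(x₀,y₀,ξ,η)^(r-1) η̃)`
on the fiber over `(x₀,y₀)`. -/
def newtonFiberOp (r : ℕ)
    (vP : MvPolynomial ((Fin n ⊕ Fin l) ⊕ (Fin n ⊕ Fin l)) k)
    (x₀ : Fin n → k) (y₀ : Fin l → k)
    {R : Type*} [CommRing R] [Algebra k R]
    (a b : (Fin n → R) × (Fin l → R)) : (Fin n → R) × (Fin l → R) :=
  (fun i => b.1 i + (evalXYΞΗ (fun i'' => algebraMap k R (x₀ i''))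
      (fun j'' => algebraMap k R (y₀ j'')) b.1 b.2 vP) ^ r * a.1 i,
   fun j => b.2 j + (evalXYΞΗ (fun i'' => algebraMap k R (x₀ i''))
      (fun j'' => algebraMap k R (y₀ j'')) b.1 b.2 vP) ^ (r - 1) * a.2 j)

/-!
Every variable of `k[x,y]` moves under the Newton substitution by a multiple of `Q^(r-1)`, so
`Q(x+Q^r ξ, y+Q^(r-1) η) ≡ Q (mod Q^(r-1))` and hence `v = 1 + Q^(r-2) w`. For `r ≥ 3` this
makes `v = 1` over any point where `Q` vanishes, e.g. over `(x₀,y₀)`, where `C = 0` forces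
`Q = 0` and, for `l ≥ 2`, `Ĉ = 0`. The defining equation of `G(R)` then reads `η = 0`, the unit
condition is empty, and the composition law is addition of the `ξ`'s.
-/

theorem dvd_aeval_sub_aeval {R A σ : Type*} [CommRing R] [CommRing A] [Algebra R A]
    {g h : σ → A} {d : A} (hgh : ∀ s, d ∣ g s - h s) (p : MvPolynomial σ R) :
    d ∣ aeval g p - aeval h p := by
  let π := Ideal.Quotient.mkₐ R (Ideal.span {d})
  have hπ : π.comp (aeval g) = π.comp (aeval h) := by
    refine algHom_ext fun s => ?_
    simpa [π, Ideal.Quotient.mkₐ_eq_mk, Ideal.Quotient.eq, Ideal.mem_span_singleton]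
      using hgh s
  have := AlgHom.congr_fun hπ p
  rwa [AlgHom.comp_apply, AlgHom.comp_apply, Ideal.Quotient.mkₐ_eq_mk, Ideal.Quotient.eq,
    Ideal.mem_span_singleton] at this

section Newton

variable (f : Fin l → MvPolynomial (Fin n ⊕ Fin l) k) {r : ℕ}

theorem dvd_aeval_newtonSubst_sub_rename (p : MvPolynomial (Fin n ⊕ Fin l) k) :
    rename Sum.inl (jacQ f) ^ (r - 1) ∣ aeval (newtonSubst f r) p - rename Sum.inl p := by
  rw [← aeval_X_left_apply (rename Sum.inl p), aeval_rename]
  refine dvd_aeval_sub_aeval (fun w => ?_) p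
  rcases w with i | j
  · simpa [newtonSubst] using
      dvd_mul_of_dvd_left (pow_dvd_pow _ (Nat.sub_le r 1)) _
  · simp [newtonSubst]

variable {f}

theorem IsNewtonV.eq_one_add {vP} (hv : IsNewtonV f r vP) (hQ0 : jacQ f ≠ 0) (hr : 2 ≤ r) :
    ∃ w, vP = 1 + rename Sum.inl (jacQ f) ^ (r - 2) * w := by
  obtain ⟨w, hw⟩ := dvd_aeval_newtonSubst_sub_rename f (r := r) (jacQ f)
  have hQ : rename (Sum.inl : _ → _ ⊕ (Fin n ⊕ Fin l)) (jacQ f) ≠ 0 :=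
    (map_ne_zero_iff _ (rename_injective _ Sum.inl_injective)).mpr hQ0
  refine ⟨w, mul_left_cancel₀ hQ ?_⟩
  rw [hv, sub_eq_iff_eq_add'.mp hw, show r - 1 = r - 2 + 1 by omega]
  ring

end Newton

theorem aeval_jacQ {S : Type*} [CommRing S] [Algebra k S]
    (f : Fin l → MvPolynomial (Fin n ⊕ Fin l) k) (x : Fin n → S) (y : Fin l → S) :
    aeval (Sum.elim x y) (jacQ f) = (CAt f x y).det :=
  AlgHom.map_det _ _

theorem aeval_jacQ_eq_zero [Nonempty (Fin l)] {S : Type*} [CommRing S] [Algebra k S]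
    {f : Fin l → MvPolynomial (Fin n ⊕ Fin l) k} {x : Fin n → S} {y : Fin l → S}
    (hC : CAt f x y = 0) : aeval (Sum.elim x y) (jacQ f) = 0 := by
  rw [aeval_jacQ, hC, det_zero]

theorem CAt_algebraMap_eq_zero {f : Fin l → MvPolynomial (Fin n ⊕ Fin l) k}
    {x₀ : Fin n → k} {y₀ : Fin l → k} (hC : CAt f x₀ y₀ = 0)
    (S : Type*) [CommRing S] [Algebra k S] :
    CAt f (fun i => algebraMap k S (x₀ i)) (fun j => algebraMap k S (y₀ j)) = 0 := by
  ext i j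
  have := congrArg (algebraMap k S) (congrFun₂ hC i j)
  rw [CAt, of_apply, Matrix.zero_apply, map_zero, ← aeval_algebraMap_apply, Sum.comp_elim] at this
  exact this

theorem IsNewtonV.aeval_eq_one {f : Fin l → MvPolynomial (Fin n ⊕ Fin l) k} {r : ℕ}
    {vP : MvPolynomial ((Fin n ⊕ Fin l) ⊕ (Fin n ⊕ Fin l)) k} (hv : IsNewtonV f r vP)
    (hQ0 : jacQ f ≠ 0) (hr : 3 ≤ r) {S : Type*} [CommRing S] [Algebra k S]
    {g : (Fin n ⊕ Fin l) ⊕ (Fin n ⊕ Fin l) → S} (hg : aeval (g ∘ Sum.inl) (jacQ f) = 0) :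
    aeval g vP = 1 := by
  obtain ⟨w, rfl⟩ := hv.eq_one_add hQ0 (by omega)
  simp [aeval_rename, hg, zero_pow (by omega : r - 2 ≠ 0)]

theorem bijective_fst_of_mem_iff_snd_eq_zero {α β : Type*} [Zero β] {s : Set (α × β)}
    (hs : ∀ p, p ∈ s ↔ p.2 = 0) : Function.Bijective fun p : s => p.val.1 := by
  refine ⟨fun p q hpq => Subtype.ext (Prod.ext hpq ?_), fun a => ⟨⟨(a, 0), (hs _).2 rfl⟩, rfl⟩⟩
  rw [(hs p).1 p.2, (hs q).1 q.2]

section Fiber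

variable {f : Fin l → MvPolynomial (Fin n ⊕ Fin l) k} {r : ℕ}
  {uP : Fin l → MvPolynomial ((Fin n ⊕ Fin l) ⊕ (Fin n ⊕ Fin l)) k}
  {vP : MvPolynomial ((Fin n ⊕ Fin l) ⊕ (Fin n ⊕ Fin l)) k}
  {x₀ : Fin n → k} {y₀ : Fin l → k} {R : Type*} [CommRing R] [Algebra k R]

theorem IsNewtonV.evalXYΞΗ_eq_one [Nonempty (Fin l)] (hv : IsNewtonV f r vP)
    (hQ0 : jacQ f ≠ 0) (hr : 3 ≤ r) (hC : CAt f x₀ y₀ = 0) (ξ : Fin n → R) (η : Fin l → R) :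
    evalXYΞΗ (fun i => algebraMap k R (x₀ i)) (fun j => algebraMap k R (y₀ j)) ξ η vP = 1 :=
  hv.aeval_eq_one hQ0 hr <| by
    rw [Sum.elim_comp_inl]
    exact aeval_jacQ_eq_zero (CAt_algebraMap_eq_zero hC R)

theorem mem_newtonFiber_iff [Nontrivial (Fin l)] (hv : IsNewtonV f r vP)
    (hQ0 : jacQ f ≠ 0) (hr : 3 ≤ r) (hC : CAt f x₀ y₀ = 0) (p : (Fin n → R) × (Fin l → R)) :
    p ∈ newtonFiber f uP vP x₀ y₀ R ↔ p.2 = 0 := by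
  simp only [newtonFiber, Set.mem_ofPred_eq, CAt_algebraMap_eq_zero hC, adjugate_zero,
    zero_mulVec, Pi.zero_apply, add_zero, hv.evalXYΞΗ_eq_one hQ0 hr hC, isUnit_one, and_true,
    funext_iff]

theorem newtonFiberOp_of_snd_eq_zero [Nonempty (Fin l)] (hv : IsNewtonV f r vP)
    (hQ0 : jacQ f ≠ 0) (hr : 3 ≤ r) (hC : CAt f x₀ y₀ = 0) {a b : (Fin n → R) × (Fin l → R)}
    (ha : a.2 = 0) (hb : b.2 = 0) :
    newtonFiberOp r vP x₀ y₀ a b = (fun i => a.1 i + b.1 i, 0) := by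
  simp only [newtonFiberOp, hv.evalXYΞΗ_eq_one hQ0 hr hC, one_pow, one_mul, ha, hb,
    Pi.zero_apply, add_zero, add_comm (b.1 _)]
  rfl

end Fiber

theorem newton_fiber_additive_general (hl : 2 ≤ l)
    (f : Fin l → MvPolynomial (Fin n ⊕ Fin l) k) (hQ0 : jacQ f ≠ 0) (r : ℕ) (hr : 3 ≤ r)
    (uP : Fin l → MvPolynomial ((Fin n ⊕ Fin l) ⊕ (Fin n ⊕ Fin l)) k)
    (vP : MvPolynomial ((Fin n ⊕ Fin l) ⊕ (Fin n ⊕ Fin l)) k)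
    (hv : IsNewtonV f r vP)
    (x₀ : Fin n → k) (y₀ : Fin l → k)
    (hC : ∀ i j, aeval (Sum.elim x₀ y₀) (jacC f i j) = 0) :
    (aeval (Sum.elim (fun w => (C (Sum.elim x₀ y₀ w) : MvPolynomial (Fin n ⊕ Fin l) k))
        (X : (Fin n ⊕ Fin l) → MvPolynomial (Fin n ⊕ Fin l) k)) vP = 1) ∧
    (∀ (R : Type*) (_ : CommRing R) (_ : Algebra k R),
      (∀ p : (Fin n → R) × (Fin l → R), p ∈ newtonFiber f uP vP x₀ y₀ R ↔ p.2 = 0) ∧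
      (∀ a b, a ∈ newtonFiber f uP vP x₀ y₀ R → b ∈ newtonFiber f uP vP x₀ y₀ R →
        newtonFiberOp r vP x₀ y₀ a b = (fun i => a.1 i + b.1 i, 0)) ∧
      Function.Bijective
        (fun p : {p : (Fin n → R) × (Fin l → R) // p ∈ newtonFiber f uP vP x₀ y₀ R} =>
          p.val.1)) := by
  have : Nontrivial (Fin l) := Fin.nontrivial_iff_two_le.mpr hl
  have hC0 : CAt f x₀ y₀ = 0 := Matrix.ext hC
  refine ⟨hv.aeval_eq_one hQ0 hr ((aeval_C_comp_left _ _).trans ?_), fun R _ _ => ?_⟩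
  · rw [aeval_jacQ_eq_zero hC0, map_zero]
  · have hmem := mem_newtonFiber_iff (uP := uP) (R := R) hv hQ0 hr hC0
    exact ⟨hmem, fun a b ha hb => newtonFiberOp_of_snd_eq_zero hv hQ0 hr hC0
      ((hmem a).1 ha) ((hmem b).1 hb), bijective_fst_of_mem_iff_snd_eq_zero hmem⟩

/-- **Fiber of the Newton groupoid for `r ≥ 3`: additive group.**
Fix `r ≥ 3`, `l ≥ 2`, and a `k`-point `(x₀,y₀)` with `f(x₀,y₀) = 0` and `C(x₀,y₀) = 0`
(hence `Q(x₀,y₀) = 0` and `Ĉ(x₀,y₀) = 0`).  Then: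
(a) `v(x₀,y₀,ξ,η) = 1` identically as a polynomial in `ξ,η`;
(b) for every commutative `k`-algebra `R`, the group `G(R)` equals `Rⁿ × {0}`, the
operation is `(ξ̃,0)∘(ξ,0) = (ξ + ξ̃, 0)`; hence `(ξ,η) ↦ ξ` is a bijection of `G(R)`
with the additive group `Rⁿ`, naturally in `R`. -/
theorem newton_fiber_additive (hn : 1 ≤ n) (hl : 2 ≤ l)
    (f : Fin l → MvPolynomial (Fin n ⊕ Fin l) k) (hQ0 : jacQ f ≠ 0) (r : ℕ) (hr : 3 ≤ r)
    (uP : Fin l → MvPolynomial ((Fin n ⊕ Fin l) ⊕ (Fin n ⊕ Fin l)) k)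
    (vP : MvPolynomial ((Fin n ⊕ Fin l) ⊕ (Fin n ⊕ Fin l)) k)
    (hu : IsNewtonU f r uP) (hv : IsNewtonV f r vP)
    (x₀ : Fin n → k) (y₀ : Fin l → k)
    (hf : ∀ i, aeval (Sum.elim x₀ y₀) (f i) = 0)
    (hC : ∀ i j, aeval (Sum.elim x₀ y₀) (jacC f i j) = 0) :
    (aeval (Sum.elim (fun w => (C (Sum.elim x₀ y₀ w) : MvPolynomial (Fin n ⊕ Fin l) k))
        (X : (Fin n ⊕ Fin l) → MvPolynomial (Fin n ⊕ Fin l) k)) vP = 1) ∧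
    (∀ (R : Type*) (_ : CommRing R) (_ : Algebra k R),
      (∀ p : (Fin n → R) × (Fin l → R), p ∈ newtonFiber f uP vP x₀ y₀ R ↔ p.2 = 0) ∧
      (∀ a b, a ∈ newtonFiber f uP vP x₀ y₀ R → b ∈ newtonFiber f uP vP x₀ y₀ R →
        newtonFiberOp r vP x₀ y₀ a b = (fun i => a.1 i + b.1 i, 0)) ∧
      Function.Bijective
        (fun p : {p : (Fin n → R) × (Fin l → R) // p ∈ newtonFiber f uP vP x₀ y₀ R} =>
          p.val.1)) :=
  newton_fiber_additive_general hl f hQ0 r hr uP vP hv x₀ y₀ hC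

end
end

section
/- (Fiber at a nonsingular double point, char ≠ 2: 𝔾_m ⋉ 𝔾_a^{n-1}.) Suppose char k ≠ 2, n ≥ 1, a ∈ k with a ≠ 0, and b = (b₁,…,bₙ) ∈ kⁿ with b ≠ 0. For a commutative k-algebra R set G(R) := {(ξ,η) ∈ Rⁿ × R : η + a·η² + Σᵢ bᵢξᵢ = 0 and 1 + 2aη ∈ R^×}, with operation (ξ̃,η̃)∘(ξ,η) := (ξ + (1+2aη)²·ξ̃, η + η̃ + 2a·η·η̃). Then for every R this operation makes G(R) a group, and G(R) is isomorphic to the semidirect product R^× ⋉ R^{n-1}, where λ ∈ R^× acts on the additive group R^{n-1} by multiplication by λ²; in particular the map (ξ,η) ↦ 1 + 2aη is a surjective group homomorphism G(R) → R^× whose kernel is isomorphic to the additive group R^{n-1}. -/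
noncomputable section

variable {k : Type*} [Field k] {n : ℕ}

/-- The group `G(R)` at a nonsingular double point:
`{(ξ,η) : η + aη² + Σ bᵢξᵢ = 0, 1 + 2aη ∈ R^×}`. -/
def doubleFiber (a : k) (b : Fin n → k) (R : Type*) [CommRing R] [Algebra k R] :
    Set ((Fin n → R) × R) :=
  {p | p.2 + algebraMap k R a * p.2 ^ 2 + ∑ i, algebraMap k R (b i) * p.1 i = 0 ∧
    IsUnit (1 + 2 * algebraMap k R a * p.2)}

/-- The operation `(ξ̃,η̃)∘(ξ,η) = (ξ + (1+2aη)²·ξ̃, η + η̃ + 2a·η·η̃)`. -/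
def doubleFiberOp (a : k) {R : Type*} [CommRing R] [Algebra k R]
    (p q : (Fin n → R) × R) : (Fin n → R) × R :=
  (fun i => q.1 i + (1 + 2 * algebraMap k R a * q.2) ^ 2 * p.1 i,
   q.2 + p.2 + 2 * algebraMap k R a * q.2 * p.2)

section Aux

variable {k : Type*} [Field k] {m : ℕ} {R : Type*} [CommRing R] [Algebra k R]

/-- auxiliary: the `η`-component corresponding to a unit. -/
def dfEta (a : k) (R : Type*) [CommRing R] [Algebra k R] (u : Rˣ) : R :=
  algebraMap k R ((2*a)⁻¹) * ((↑u⁻¹ : R) - 1)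

/-- auxiliary: the `ξ`-component corresponding to a unit and a free vector. -/
def dfXi (a : k) (b : Fin (m+1) → k) (j : Fin (m+1)) (u : Rˣ) (w : Fin m → R) :
    Fin (m+1) → R :=
  j.insertNth
    (algebraMap k R ((b j)⁻¹) *
      (-(dfEta a R u + algebraMap k R a * dfEta a R u ^ 2)
        - ∑ i, algebraMap k R (b (j.succAbove i)) * ((↑u⁻¹ : R) ^ 2 * w i)))
    (fun i => (↑u⁻¹ : R) ^ 2 * w i)

lemma dfXi_succAbove (a : k) (b : Fin (m+1) → k) (j : Fin (m+1)) (u : Rˣ) (w : Fin m → R)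
    (i : Fin m) : dfXi a b j u w (j.succAbove i) = (↑u⁻¹ : R) ^ 2 * w i := by
  simp [dfXi, Fin.insertNth_apply_succAbove]

lemma dfXi_same (a : k) (b : Fin (m+1) → k) (j : Fin (m+1)) (u : Rˣ) (w : Fin m → R) :
    dfXi a b j u w j =
      algebraMap k R ((b j)⁻¹) *
        (-(dfEta a R u + algebraMap k R a * dfEta a R u ^ 2)
          - ∑ i, algebraMap k R (b (j.succAbove i)) * ((↑u⁻¹ : R) ^ 2 * w i)) := by
  simp [dfXi, Fin.insertNth_apply_same]

lemma dfEta_lam (a : k) (hc1 : algebraMap k R ((2*a)⁻¹) * (2 * algebraMap k R a) = 1)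
    (u : Rˣ) : 1 + 2 * algebraMap k R a * dfEta a R u = (↑u⁻¹ : R) := by
  unfold dfEta
  linear_combination ((↑u⁻¹ : R) - 1) * hc1

lemma dfMem (a : k) (b : Fin (m+1) → k) (j : Fin (m+1))
    (hc1 : algebraMap k R ((2*a)⁻¹) * (2 * algebraMap k R a) = 1)
    (hd1 : algebraMap k R ((b j)⁻¹) * algebraMap k R (b j) = 1)
    (u : Rˣ) (w : Fin m → R) :
    (dfXi a b j u w, dfEta a R u) ∈ doubleFiber a b R := by
  constructor
  · show dfEta a R u + algebraMap k R a * dfEta a R u ^ 2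
      + ∑ i, algebraMap k R (b i) * dfXi a b j u w i = 0
    rw [Fin.sum_univ_succAbove (fun i => algebraMap k R (b i) * dfXi a b j u w i) j]
    simp only [dfXi_same, dfXi_succAbove]
    linear_combination (-(dfEta a R u + algebraMap k R a * dfEta a R u ^ 2)
      - ∑ i, algebraMap k R (b (j.succAbove i)) * ((↑u⁻¹ : R) ^ 2 * w i)) * hd1
  · show IsUnit (1 + 2 * algebraMap k R a * dfEta a R u)
    rw [dfEta_lam a hc1]
    exact (u⁻¹).isUnit

lemma dfEq (a : k) (b : Fin (m+1) → k) (j : Fin (m+1))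
    (hc1 : algebraMap k R ((2*a)⁻¹) * (2 * algebraMap k R a) = 1)
    (hd1 : algebraMap k R ((b j)⁻¹) * algebraMap k R (b j) = 1)
    (p : (Fin (m+1) → R) × R) (hp : p ∈ doubleFiber a b R)
    (u : Rˣ) (hu : (↑u⁻¹ : R) = 1 + 2 * algebraMap k R a * p.2)
    (w : Fin m → R) (hw : ∀ i, w i = (↑u : R) ^ 2 * p.1 (j.succAbove i)) :
    (dfXi a b j u w, dfEta a R u) = p := by
  obtain ⟨ξ, η⟩ := p
  obtain ⟨h1, h2⟩ := hp
  have hE : dfEta a R u = η := by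
    unfold dfEta
    rw [hu]
    linear_combination η * hc1
  have hS : ∑ i, algebraMap k R (b (j.succAbove i)) * ((↑u⁻¹ : R) ^ 2 * w i)
      = ∑ i, algebraMap k R (b (j.succAbove i)) * ξ (j.succAbove i) := by
    refine Finset.sum_congr rfl fun i _ => ?_
    rw [hw i]
    linear_combination (algebraMap k R (b (j.succAbove i)) * ξ (j.succAbove i)
      * ((↑u : R) * (↑u⁻¹ : R) + 1)) * u.mul_inv
  have h1' : η + algebraMap k R a * η ^ 2 + (algebraMap k R (b j) * ξ j
      + ∑ i, algebraMap k R (b (j.succAbove i)) * ξ (j.succAbove i)) = 0 := by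
    rw [← Fin.sum_univ_succAbove (fun i => algebraMap k R (b i) * ξ i) j]
    exact h1
  simp only [Prod.mk.injEq]
  refine ⟨funext fun i => ?_, hE⟩
  rcases eq_or_ne i j with rfl | hne
  · rw [dfXi_same, hE, hS]
    linear_combination (- algebraMap k R ((b i)⁻¹)) * h1' + (ξ i) * hd1
  · obtain ⟨i', rfl⟩ := Fin.exists_succAbove_eq hne
    rw [dfXi_succAbove, hw i']
    linear_combination (ξ (j.succAbove i') * ((↑u : R) * (↑u⁻¹ : R) + 1)) * u.mul_inv

end Aux

/-- **Fiber at a nonsingular double point, `char k ≠ 2`: `𝔾ₘ ⋉ 𝔾ₐ^(n-1)`.**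
For every commutative `k`-algebra `R` the operation makes `G(R)` a group, isomorphic to
the semidirect product `R^× ⋉ R^(n-1)` (with `(λ,w)·(λ',w') = (λλ', w + λ²·w')`);
in particular `(ξ,η) ↦ 1 + 2aη` is a surjective group homomorphism `G(R) → R^×` whose
kernel is isomorphic to the additive group `R^(n-1)`. -/
theorem double_fiber_semidirect (hchar : (2 : k) ≠ 0) (hn : 1 ≤ n)
    (a : k) (ha : a ≠ 0) (b : Fin n → k) (hb : b ≠ 0)
    (R : Type*) [CommRing R] [Algebra k R] :
    -- the operation makes `G(R)` a group with identity `(0,0)`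
    ((∀ p q, p ∈ doubleFiber a b R → q ∈ doubleFiber a b R →
        doubleFiberOp a p q ∈ doubleFiber a b R) ∧
      ((0, 0) ∈ doubleFiber a b R) ∧
      (∀ p, p ∈ doubleFiber a b R →
        doubleFiberOp a p (0, 0) = p ∧ doubleFiberOp a (0, 0) p = p) ∧
      (∀ p q s, p ∈ doubleFiber a b R → q ∈ doubleFiber a b R → s ∈ doubleFiber a b R →
        doubleFiberOp a (doubleFiberOp a p q) s = doubleFiberOp a p (doubleFiberOp a q s)) ∧
      (∀ p, p ∈ doubleFiber a b R → ∃ q, q ∈ doubleFiber a b R ∧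
        doubleFiberOp a p q = (0, 0) ∧ doubleFiberOp a q p = (0, 0))) ∧
    -- `G(R)` is isomorphic to the semidirect product `R^× ⋉ R^(n-1)`
    (∃ e : {p : (Fin n → R) × R // p ∈ doubleFiber a b R} ≃ (Rˣ × (Fin (n - 1) → R)),
      ∀ p q s : {p : (Fin n → R) × R // p ∈ doubleFiber a b R},
        s.val = doubleFiberOp a p.val q.val →
          (e s).1 = (e p).1 * (e q).1 ∧
          (e s).2 = fun i => (e p).2 i + ((e p).1 : R) ^ 2 * (e q).2 i) ∧
    -- `(ξ,η) ↦ 1 + 2aη` is a group homomorphism to the units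
    (∀ p q, p ∈ doubleFiber a b R → q ∈ doubleFiber a b R →
      1 + 2 * algebraMap k R a * (doubleFiberOp a p q).2 =
        (1 + 2 * algebraMap k R a * p.2) * (1 + 2 * algebraMap k R a * q.2)) ∧
    -- it is surjective onto `R^×`
    (∀ lam : R, IsUnit lam → ∃ p, p ∈ doubleFiber a b R ∧
      1 + 2 * algebraMap k R a * p.2 = lam) ∧
    -- its kernel is isomorphic to the additive group `R^(n-1)`
    (∃ e : {p : (Fin n → R) × R // p ∈ doubleFiber a b R ∧
        1 + 2 * algebraMap k R a * p.2 = 1} ≃ (Fin (n - 1) → R),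
      ∀ p q s, s.val = doubleFiberOp a p.val q.val → e s = e p + e q) := by
  obtain ⟨m, rfl⟩ : ∃ m, n = m + 1 := ⟨n - 1, (Nat.succ_pred_eq_of_pos hn).symm⟩
  obtain ⟨j, hj⟩ : ∃ j, b j ≠ 0 := Function.ne_iff.mp hb
  have h2a : (2 : k) * a ≠ 0 := mul_ne_zero hchar ha
  have hc1 : algebraMap k R ((2*a)⁻¹) * (2 * algebraMap k R a) = 1 := by
    rw [show (2:R) = algebraMap k R 2 from (map_ofNat _ 2).symm, ← map_mul, ← map_mul,
      inv_mul_cancel₀ h2a, map_one]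
  have hd1 : algebraMap k R ((b j)⁻¹) * algebraMap k R (b j) = 1 := by
    rw [← map_mul, inv_mul_cancel₀ hj, map_one]
  refine ⟨⟨?_, ?_, ?_, ?_, ?_⟩, ?_, ?_, ?_, ?_⟩
  · -- closure
    rintro ⟨ξp, ηp⟩ ⟨ξq, ηq⟩ ⟨hp1, hp2⟩ ⟨hq1, hq2⟩
    simp only [doubleFiber, doubleFiberOp, Set.mem_setOf_eq] at hp1 hq1 ⊢
    have hsum : ∑ i, algebraMap k R (b i) *
        (ξq i + (1 + 2 * algebraMap k R a * ηq) ^ 2 * ξp i)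
        = (∑ i, algebraMap k R (b i) * ξq i)
          + (1 + 2 * algebraMap k R a * ηq) ^ 2 * ∑ i, algebraMap k R (b i) * ξp i := by
      rw [Finset.mul_sum, ← Finset.sum_add_distrib]
      exact Finset.sum_congr rfl fun i _ => by ring
    constructor
    · rw [hsum]; linear_combination hq1 + (1 + 2 * algebraMap k R a * ηq) ^ 2 * hp1
    · have : 1 + 2 * algebraMap k R a * (ηq + ηp + 2 * algebraMap k R a * ηq * ηp)
          = (1 + 2 * algebraMap k R a * ηp) * (1 + 2 * algebraMap k R a * ηq) := by ring
      rw [this]; exact hp2.mul hq2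
  · -- identity membership
    constructor
    · simp
    · simp
  · -- identity laws
    rintro ⟨ξ, η⟩ _
    constructor <;> (simp only [doubleFiberOp, Prod.mk.injEq]; exact ⟨by funext i; simp, by simp⟩)
  · -- associativity
    intro p q s _ _ _
    simp only [doubleFiberOp, Prod.mk.injEq]
    constructor
    · funext i; ring
    · ring
  · -- inverses
    rintro ⟨ξ, η⟩ ⟨h1, h2⟩
    obtain ⟨u, hu⟩ := h2
    have hv : (1 + 2 * algebraMap k R a * η) * ↑u⁻¹ = 1 := by rw [← hu]; exact u.mul_inv
    have hw : 1 + 2 * algebraMap k R a * (-(↑u⁻¹:R) * η) = (↑u⁻¹:R) := by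
      linear_combination (-1:R) * hv
    refine ⟨(fun i => -(↑u⁻¹:R)^2 * ξ i, -(↑u⁻¹:R) * η), ⟨?_, ?_⟩, ?_, ?_⟩
    · show -(↑u⁻¹:R) * η + algebraMap k R a * (-(↑u⁻¹:R) * η)^2
        + ∑ i, algebraMap k R (b i) * (-(↑u⁻¹:R)^2 * ξ i) = 0
      have hsum : ∑ i, algebraMap k R (b i) * (-(↑u⁻¹:R)^2 * ξ i)
          = -(↑u⁻¹:R)^2 * ∑ i, algebraMap k R (b i) * ξ i := by
        rw [Finset.mul_sum]; exact Finset.sum_congr rfl fun i _ => by ring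
      rw [hsum]
      linear_combination (-(↑u⁻¹:R)^2) * h1 + (↑u⁻¹:R) * η * hv
    · show IsUnit (1 + 2 * algebraMap k R a * (-(↑u⁻¹:R) * η))
      rw [hw]; exact u⁻¹.isUnit
    · simp only [doubleFiberOp, Prod.mk.injEq]
      constructor
      · funext i
        show -(↑u⁻¹:R)^2 * ξ i + (1 + 2 * algebraMap k R a * (-(↑u⁻¹:R) * η))^2 * ξ i = 0
        rw [hw]; ring
      · show -(↑u⁻¹:R) * η + η + 2 * algebraMap k R a * (-(↑u⁻¹:R) * η) * η = 0
        linear_combination (-η) * hv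
    · simp only [doubleFiberOp, Prod.mk.injEq]
      constructor
      · funext i
        show ξ i + (1 + 2 * algebraMap k R a * η)^2 * (-(↑u⁻¹:R)^2 * ξ i) = 0
        linear_combination (-(ξ i) * ((1 + 2 * algebraMap k R a * η) * (↑u⁻¹:R) + 1)) * hv
      · show η + -(↑u⁻¹:R) * η + 2 * algebraMap k R a * η * (-(↑u⁻¹:R) * η) = 0
        linear_combination (-η) * hv
  · -- the isomorphism with the semidirect product
    refine ⟨⟨fun p => ((p.2.2).unit⁻¹,
        fun i => ((↑(p.2.2).unit⁻¹ : R)) ^ 2 * p.1.1 (j.succAbove i)),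
      fun uw => ⟨(dfXi a b j uw.1 uw.2, dfEta a R uw.1), dfMem a b j hc1 hd1 uw.1 uw.2⟩,
      ?_, ?_⟩, ?_⟩
    · -- left inverse
      intro p
      apply Subtype.ext
      dsimp only
      apply dfEq a b j hc1 hd1 _ p.2
      · rw [inv_inv, IsUnit.unit_spec]
      · intro i
        rfl
    · -- right inverse
      rintro ⟨u, w⟩
      have hun : ((dfMem a b j hc1 hd1 u w).2).unit = u⁻¹ :=
        Units.ext (by rw [IsUnit.unit_spec]; exact dfEta_lam a hc1 u)
      dsimp only
      rw [Prod.mk.injEq]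
      constructor
      · rw [hun, inv_inv]
      · funext i
        rw [hun, inv_inv, dfXi_succAbove]
        linear_combination ((w i) * ((↑u : R) * (↑u⁻¹ : R) + 1)) * u.mul_inv
    · -- homomorphism property
      intro p q s hs
      have husn : (s.2.2).unit = (p.2.2).unit * (q.2.2).unit := by
        apply Units.ext
        rw [Units.val_mul, IsUnit.unit_spec, IsUnit.unit_spec, IsUnit.unit_spec, hs]
        show 1 + 2 * algebraMap k R a *
            (q.val.2 + p.val.2 + 2 * algebraMap k R a * q.val.2 * p.val.2) = _
        ring
      have hqv : (1 + 2 * algebraMap k R a * q.val.2) * (↑(q.2.2).unit⁻¹ : R) = 1 := by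
        have h := Units.mul_inv (q.2.2).unit
        rwa [IsUnit.unit_spec] at h
      have hs1 : ∀ i', s.val.1 i' = q.val.1 i'
          + (1 + 2 * algebraMap k R a * q.val.2) ^ 2 * p.val.1 i' := by
        intro i'; rw [hs]; rfl
      constructor
      · simp only [Equiv.coe_fn_mk]
        rw [husn, mul_inv]
      · funext i
        simp only [Equiv.coe_fn_mk]
        rw [husn, mul_inv, Units.val_mul, hs1]
        linear_combination ((↑(p.2.2).unit⁻¹ : R) ^ 2 * p.val.1 (j.succAbove i)
          * ((1 + 2 * algebraMap k R a * q.val.2) * (↑(q.2.2).unit⁻¹ : R) + 1)) * hqv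
  · -- homomorphism to the units
    intro p q _ _
    simp only [doubleFiberOp]
    ring
  · -- surjectivity
    intro lam hl
    obtain ⟨u, hu⟩ := hl
    refine ⟨(dfXi a b j u⁻¹ 0, dfEta a R u⁻¹), dfMem a b j hc1 hd1 u⁻¹ 0, ?_⟩
    rw [dfEta_lam a hc1, inv_inv]
    exact hu
  · -- the kernel
    have hker : ∀ w : Fin m → R,
        ((j.insertNth (algebraMap k R ((b j)⁻¹)
            * (-(∑ i, algebraMap k R (b (j.succAbove i)) * w i))) w, (0:R))
          ∈ doubleFiber a b R)
        ∧ 1 + 2 * algebraMap k R a * ((j.insertNth (algebraMap k R ((b j)⁻¹)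
            * (-(∑ i, algebraMap k R (b (j.succAbove i)) * w i))) w, (0:R))
              : (Fin (m+1) → R) × R).2 = 1 := by
      intro w
      refine ⟨⟨?_, ?_⟩, by ring⟩
      · show (0:R) + algebraMap k R a * (0:R) ^ 2 + ∑ i, algebraMap k R (b i) * _ = 0
        dsimp only
        rw [Fin.sum_univ_succAbove _ j]
        simp only [Fin.insertNth_apply_same, Fin.insertNth_apply_succAbove]
        linear_combination (-(∑ i, algebraMap k R (b (j.succAbove i)) * w i)) * hd1
      · show IsUnit (1 + 2 * algebraMap k R a * (0:R))
        simp
    have hη0 : ∀ p : {p : (Fin (m+1) → R) × R // p ∈ doubleFiber a b R ∧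
        1 + 2 * algebraMap k R a * p.2 = 1}, p.val.2 = 0 := by
      intro p
      have h := p.2.2
      linear_combination (algebraMap k R ((2*a)⁻¹)) * h - p.val.2 * hc1
    refine ⟨⟨fun p => fun i => p.1.1 (j.succAbove i),
      fun w => ⟨(j.insertNth (algebraMap k R ((b j)⁻¹)
        * (-(∑ i, algebraMap k R (b (j.succAbove i)) * w i))) w, (0:R)), hker w⟩,
      ?_, ?_⟩, ?_⟩
    · -- left inverse
      intro p
      apply Subtype.ext
      dsimp only
      have h1 := p.2.1.1
      rw [hη0 p] at h1
      rw [Fin.sum_univ_succAbove (fun i => algebraMap k R (b i) * p.val.1 i) j] at h1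
      rw [Prod.mk.injEq]
      refine ⟨funext fun i => ?_, (hη0 p).symm⟩
      rcases eq_or_ne i j with rfl | hne
      · rw [Fin.insertNth_apply_same]
        linear_combination (- algebraMap k R ((b i)⁻¹)) * h1 + (p.val.1 i) * hd1
      · obtain ⟨i', rfl⟩ := Fin.exists_succAbove_eq hne
        rw [Fin.insertNth_apply_succAbove]
    · -- right inverse
      intro w
      funext i
      dsimp only
      exact Fin.insertNth_apply_succAbove j _ _ i
    · -- additivity
      intro p q s hs
      have hq1 : 1 + 2 * algebraMap k R a * q.val.2 = 1 := q.2.2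
      have hs1 : ∀ i', s.val.1 i' = q.val.1 i'
          + (1 + 2 * algebraMap k R a * q.val.2) ^ 2 * p.val.1 i' := by
        intro i'; rw [hs]; rfl
      funext i
      simp only [Equiv.coe_fn_mk, Pi.add_apply]
      rw [hs1]
      linear_combination (p.val.1 (j.succAbove i)
        * ((1 + 2 * algebraMap k R a * q.val.2) + 1)) * hq1

end
end
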